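/- arXiv:0808.1173 — 2 statements merged into one kernel-verified Lean document; each statement's English description precedes it below -/
import Mathlib

section
/- Exactness of the discrete quadrature on harmonic polynomials: for every spherical polynomial Y of degree at most N-1 (i.e., Y ∈ ⊕_{n=0}^{N-1} H_n), the continuous Laplace–Fourier coefficients equal the discrete ones: ⟨Y, Y_{nk}⟩ = Σ_{k'=1}^N Σ_{j=0}^{2N} Y(θ_{k'},φ_j) conj(Y_{nk}(θ_{k'},φ_j)) μ_N(z_{k'j}) for all n < N, |k| ≤ n. -/
open scoped Real ComplexConjugate
open Finset Matrix

/-- Legendre polynomial via Rodrigues' formula, normalized by `P_n(1) = 1`. -/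
noncomputable def legendreP (n : ℕ) (x : ℝ) : ℝ :=
  (1 / (2 ^ n * n.factorial)) * iteratedDeriv n (fun y : ℝ => (y ^ 2 - 1) ^ n) x

/-- Normalized associated Legendre function
`𝒫_n^k(x) = √((n-k)!/(n+k)!) (1-x²)^{k/2} dᵏ/dxᵏ P_n(x)`. -/
noncomputable def normAssocLegendre (n k : ℕ) (x : ℝ) : ℝ :=
  Real.sqrt (((n - k).factorial : ℝ) / ((n + k).factorial : ℝ)) *
    (1 - x ^ 2) ^ ((k : ℝ) / 2) * iteratedDeriv k (legendreP n) x

/-- Spherical harmonic `Y_{nk}(θ,φ) = √(2n+1) · 𝒫_n^{|k|}(cos θ) e^{ikφ}`. -/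
noncomputable def sphY (n : ℕ) (k : ℤ) (θ φ : ℝ) : ℂ :=
  (Real.sqrt (2 * n + 1) * normAssocLegendre n k.natAbs (Real.cos θ) : ℝ) *
    Complex.exp (Complex.I * k * φ)

/-- The normalized `L²(S²)` inner product in spherical coordinates:
`⟨f,g⟩ = (1/4π) ∫₀^{2π} ∫₀^π f(θ,φ) conj(g(θ,φ)) sin θ dθ dφ`. -/
noncomputable def sphInner (f g : ℝ → ℝ → ℂ) : ℂ :=
  (1 / (4 * π)) * ∫ φ in (0:ℝ)..(2 * π), ∫ θ in (0:ℝ)..π,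
    f θ φ * conj (g θ φ) * (Real.sin θ : ℂ)

/-- The point on the unit sphere with colatitude `θ` and longitude `φ`. -/
noncomputable def spt (θ φ : ℝ) : EuclideanSpace ℝ (Fin 3) :=
  WithLp.toLp 2 ![Real.sin θ * Real.cos φ, Real.sin θ * Real.sin φ, Real.cos θ]

/-- The Christoffel number (Gauss–Legendre weight) `A_i^N = ∫_{-1}^1 l_i^N(x) dx`,
where `l_i^N` is the Lagrange fundamental polynomial at the nodes `lam`. -/
noncomputable def christoffel (N : ℕ) (lam : Fin N → ℝ) (i : Fin N) : ℝ :=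
  ∫ x in (-1:ℝ)..1, ∏ j ∈ Finset.univ.erase i, (x - lam j) / (lam i - lam j)

/-- The weighted scaling function `φ_j(·, η)` centered at `η = (θ₀,φ₀)`,
`φ_j(ξ,η) = Σ_{n<m_j} Σ_{k=-n}^n conj(Y_{nk}(η)) Y_{nk}(ξ)`. -/
noncomputable def scalingFun (mj : ℕ) (θ₀ φ₀ θ φ : ℝ) : ℂ :=
  ∑ n ∈ Finset.range mj, ∑ k ∈ Finset.Icc (-(n:ℤ)) n,
    conj (sphY n k θ₀ φ₀) * sphY n k θ φ

/-- The wavelet `ψ_j(·, η)`,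
`ψ_j(ξ,η) = Σ_{n=m_j}^{m_{j+1}-1} Σ_{k=-n}^n conj(Y_{nk}(η)) Y_{nk}(ξ)`. -/
noncomputable def waveletFun (mj mj1 : ℕ) (θ₀ φ₀ θ φ : ℝ) : ℂ :=
  ∑ n ∈ Finset.Ico mj mj1, ∑ k ∈ Finset.Icc (-(n:ℤ)) n,
    conj (sphY n k θ₀ φ₀) * sphY n k θ φ


section AuxDCE
open Polynomial intervalIntegral
noncomputable def Lp (n : ℕ) : ℝ[X] :=
  C ((1:ℝ) / (2 ^ n * n.factorial)) * derivative^[n] ((X ^ 2 - C 1) ^ n)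

lemma iteratedDeriv_polyEval (p : ℝ[X]) (k : ℕ) :
    iteratedDeriv k (fun y : ℝ => p.eval y) = fun y => (derivative^[k] p).eval y := by
  induction k with
  | zero => simp
  | succ k ih =>
    rw [iteratedDeriv_succ, ih, Function.iterate_succ_apply']
    funext x
    exact Polynomial.deriv _


lemma legendreP_eq (n : ℕ) (x : ℝ) : legendreP n x = (Lp n).eval x := by
  unfold legendreP Lp
  rw [show (fun y : ℝ => (y ^ 2 - 1) ^ n) = fun y => (((X ^ 2 - C 1) ^ n : ℝ[X])).eval y by
    funext y; simp, iteratedDeriv_polyEval]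
  simp

lemma natDegree_R (n : ℕ) : ((X ^ 2 - C 1 : ℝ[X]) ^ n).natDegree = 2 * n := by
  have h2 : (X ^ 2 - C 1 : ℝ[X]).natDegree = 2 := by
    exact natDegree_X_pow_sub_C
  rw [natDegree_pow, h2, mul_comm]

lemma monic_R (n : ℕ) : ((X ^ 2 - C 1 : ℝ[X]) ^ n).Monic := by
  exact (monic_X_pow_sub_C (1:ℝ) two_ne_zero).pow n

lemma coeff_D (n : ℕ) : (derivative^[n] ((X ^ 2 - C 1 : ℝ[X]) ^ n)).coeff n
    = ((2 * n).descFactorial n : ℝ) := by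
  rw [coeff_iterate_derivative]
  have : ((X ^ 2 - C 1 : ℝ[X]) ^ n).coeff (n + n) = 1 := by
    have := (monic_R n).leadingCoeff
    rwa [leadingCoeff, natDegree_R, two_mul] at this
  rw [this, nsmul_eq_mul, mul_one]
  norm_num [two_mul]

lemma natDegree_D (n : ℕ) : (derivative^[n] ((X ^ 2 - C 1 : ℝ[X]) ^ n)).natDegree = n := by
  refine le_antisymm ?_ ?_
  · have := natDegree_iterate_derivative ((X ^ 2 - C 1 : ℝ[X]) ^ n) n
    rwa [natDegree_R, two_mul, Nat.add_sub_cancel] at this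
  · apply le_natDegree_of_ne_zero
    rw [coeff_D]
    exact_mod_cast (Nat.pos_of_ne_zero (fun h => by simp [Nat.descFactorial_eq_zero_iff_lt] at h; omega)).ne'

lemma c0_ne (n : ℕ) : ((1:ℝ) / (2 ^ n * n.factorial)) ≠ 0 := by
  positivity

lemma Lp_ne_zero (n : ℕ) : Lp n ≠ 0 := by
  intro h
  have : (Lp n).coeff n = 0 := by rw [h]; simp
  rw [Lp, coeff_C_mul, coeff_D] at this
  rcases mul_eq_zero.mp this with h1 | h1
  · exact c0_ne n h1
  · exact (by exact_mod_cast (Nat.pos_of_ne_zero (fun h => by simp [Nat.descFactorial_eq_zero_iff_lt] at h; omega)).ne' : ((2*n).descFactorial n : ℝ) ≠ 0) h1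

lemma natDegree_Lp (n : ℕ) : (Lp n).natDegree = n := by
  rw [Lp, natDegree_C_mul (c0_ne n), natDegree_D]



section Factor
variable {N : ℕ} (hN : 1 ≤ N) (lam : Fin N → ℝ) (hinj : Function.Injective lam)
  (hroot : ∀ i, (Lp N).eval (lam i) = 0)

noncomputable def Mpoly (N : ℕ) (lam : Fin N → ℝ) : ℝ[X] := ∏ i : Fin N, (X - C (lam i))

lemma Mpoly_monic : (Mpoly N lam).Monic :=
  monic_prod_of_monic _ _ fun i _ => monic_X_sub_C _

lemma Mpoly_natDegree : (Mpoly N lam).natDegree = N := by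
  rw [Mpoly, natDegree_prod _ _ (fun i _ => X_sub_C_ne_zero _)]
  simp

include hinj hroot in
lemma Mpoly_dvd : Mpoly N lam ∣ Lp N := by
  have hs : (Multiset.map lam Finset.univ.val).Nodup :=
    Multiset.Nodup.map hinj Finset.univ.nodup
  have hle : Multiset.map lam Finset.univ.val ≤ (Lp N).roots := by
    rw [Multiset.le_iff_subset hs]
    intro a ha
    obtain ⟨i, _, rfl⟩ := Multiset.mem_map.mp ha
    rw [mem_roots (Lp_ne_zero N)]
    exact hroot i
  have := (Multiset.prod_X_sub_C_dvd_iff_le_roots (Lp_ne_zero N)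
    (Multiset.map lam Finset.univ.val)).mpr hle
  rw [Multiset.map_map] at this
  rwa [Mpoly, Finset.prod_eq_multiset_prod]

include hinj hroot in
lemma Lp_eq_C_mul_Mpoly : ∃ c : ℝ, c ≠ 0 ∧ Lp N = C c * Mpoly N lam := by
  obtain ⟨q, hq⟩ := Mpoly_dvd lam hinj hroot
  have hq0 : q ≠ 0 := by
    intro h; rw [h, mul_zero] at hq; exact Lp_ne_zero N hq
  have hdeg : q.natDegree = 0 := by
    have := natDegree_Lp N
    rw [hq, natDegree_mul ((Mpoly_monic lam).ne_zero) hq0, Mpoly_natDegree] at this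
    omega
  refine ⟨q.coeff 0, ?_, ?_⟩
  · intro h
    have := Polynomial.eq_C_of_natDegree_eq_zero hdeg
    rw [this, h, _root_.map_zero, mul_zero] at hq
    exact Lp_ne_zero N hq
  · rw [hq, Polynomial.eq_C_of_natDegree_eq_zero hdeg]
    rw [coeff_C_zero]
    ring

end Factor

/-- boundary vanishing -/
lemma boundary_eval (N j : ℕ) (hj : j < N) (a : ℝ) (ha : (X - C a) ∣ (X ^ 2 - C 1 : ℝ[X])) :
    (derivative^[j] ((X ^ 2 - C 1 : ℝ[X]) ^ N)).eval a = 0 := by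
  have h1 : (X - C a) ^ N ∣ (X ^ 2 - C 1 : ℝ[X]) ^ N := pow_dvd_pow_of_dvd ha N
  have h2 : (X - C a) ^ (N - j) ∣ derivative^[j] ((X ^ 2 - C 1 : ℝ[X]) ^ N) :=
    Polynomial.pow_sub_dvd_iterate_derivative_of_pow_dvd j h1
  have h3 : (X - C a) ∣ derivative^[j] ((X ^ 2 - C 1 : ℝ[X]) ^ N) :=
    (dvd_pow_self _ (by omega : N - j ≠ 0)).trans h2
  exact (Polynomial.dvd_iff_isRoot).mp h3

lemma poly_intble (p : ℝ[X]) (a b : ℝ) :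
    IntervalIntegrable (fun x => p.eval x) MeasureTheory.volume a b :=
  (Polynomial.continuous p).intervalIntegrable _ _

/-- integration by parts chain -/
lemma ibp_chain (N : ℕ) (q : ℝ[X]) :
    ∀ m ≤ N, (∫ x in (-1:ℝ)..1, q.eval x * (derivative^[N] ((X ^ 2 - C 1 : ℝ[X]) ^ N)).eval x)
      = (-1) ^ m * ∫ x in (-1:ℝ)..1,
          (derivative^[m] q).eval x * (derivative^[N - m] ((X ^ 2 - C 1 : ℝ[X]) ^ N)).eval x := by
  intro m hm
  induction m with
  | zero => simp
  | succ m ih =>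
    rw [ih (by omega)]
    have hmN : m < N := by omega
    set R : ℝ[X] := (X ^ 2 - C 1 : ℝ[X]) ^ N with hR
    set u : ℝ[X] := derivative^[m] q
    set w : ℝ[X] := derivative^[N - (m+1)] R
    have hsplit : derivative^[N - m] R = derivative w := by
      rw [show N - m = (N - (m+1)) + 1 by omega, Function.iterate_succ_apply']
    have hibp : (∫ x in (-1:ℝ)..1, u.eval x * (derivative w).eval x)
        = u.eval 1 * w.eval 1 - u.eval (-1) * w.eval (-1)
          - ∫ x in (-1:ℝ)..1, (derivative u).eval x * w.eval x := by
      apply integral_mul_deriv_eq_deriv_mul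
        (fun x _ => Polynomial.hasDerivAt u x) (fun x _ => Polynomial.hasDerivAt w x)
        (poly_intble _ _ _) (poly_intble _ _ _)
    have hb1 : w.eval 1 = 0 :=
      boundary_eval N _ (by omega) 1 ⟨X + C 1, by simp only [_root_.map_one]; ring⟩
    have hb2 : w.eval (-1) = 0 := by
      refine boundary_eval N _ (by omega) (-1) ⟨X - C 1, ?_⟩
      simp only [_root_.map_neg, _root_.map_one]; ring
    rw [hsplit, hibp, hb1, hb2]
    rw [show derivative u = derivative^[m+1] q from (Function.iterate_succ_apply' _ _ _).symm]
    ring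

lemma orth_Lp (N : ℕ) (q : ℝ[X]) (hq : q.natDegree < N) :
    (∫ x in (-1:ℝ)..1, q.eval x * (Lp N).eval x) = 0 := by
  have h0 : (∫ x in (-1:ℝ)..1,
      q.eval x * (derivative^[N] ((X ^ 2 - C 1 : ℝ[X]) ^ N)).eval x) = 0 := by
    rw [ibp_chain N q N le_rfl, Polynomial.iterate_derivative_eq_zero hq]
    simp
  have : ∀ x : ℝ, q.eval x * (Lp N).eval x
      = ((1:ℝ) / (2 ^ N * N.factorial)) *
        (q.eval x * (derivative^[N] ((X ^ 2 - C 1 : ℝ[X]) ^ N)).eval x) := by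
    intro x; rw [Lp]; simp; ring
  simp_rw [this, intervalIntegral.integral_const_mul, h0, mul_zero]


lemma christoffel_eq (N : ℕ) (lam : Fin N → ℝ) (i : Fin N) :
    christoffel N lam i = ∫ x in (-1:ℝ)..1, (Lagrange.basis Finset.univ lam i).eval x := by
  unfold christoffel
  congr 1
  funext x
  rw [Lagrange.basis, eval_prod]
  refine Finset.prod_congr rfl fun j _ => ?_
  rw [Lagrange.basisDivisor]
  simp [div_eq_inv_mul, mul_comm]

lemma lagrange_exact {N : ℕ} (hN : 1 ≤ N) (lam : Fin N → ℝ) (hinj : Function.Injective lam)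
    (p : ℝ[X]) (hp : p.natDegree < N) :
    (∫ x in (-1:ℝ)..1, p.eval x) = ∑ i : Fin N, christoffel N lam i * p.eval (lam i) := by
  have hvs : Set.InjOn lam (Finset.univ : Finset (Fin N)) := hinj.injOn
  have hdeg : p.degree < (Finset.univ : Finset (Fin N)).card := by
    calc p.degree ≤ (p.natDegree : WithBot ℕ) := degree_le_natDegree
    _ < ((Finset.univ : Finset (Fin N)).card : WithBot ℕ) := by
        rw [Finset.card_univ, Fintype.card_fin]; exact_mod_cast hp
  have hinterp := Lagrange.eq_interpolate (v := lam) hvs hdeg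
  conv_lhs => rw [hinterp]
  rw [Lagrange.interpolate_apply]
  have : ∀ x : ℝ, (∑ i : Fin N, C (p.eval (lam i)) * Lagrange.basis Finset.univ lam i).eval x
      = ∑ i : Fin N, p.eval (lam i) * (Lagrange.basis Finset.univ lam i).eval x := by
    intro x; rw [eval_finset_sum]; simp
  simp_rw [this]
  rw [intervalIntegral.integral_finset_sum (fun i _ =>
    ((poly_intble (Lagrange.basis Finset.univ lam i) _ _).const_mul _))]
  refine Finset.sum_congr rfl fun i _ => ?_
  rw [intervalIntegral.integral_const_mul, christoffel_eq]
  ring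

lemma gauss_exact {N : ℕ} (hN : 1 ≤ N) (lam : Fin N → ℝ) (hinj : Function.Injective lam)
    (hroot : ∀ i, (Lp N).eval (lam i) = 0)
    (p : ℝ[X]) (hp : p.natDegree < 2 * N) :
    (∫ x in (-1:ℝ)..1, p.eval x) = ∑ i : Fin N, christoffel N lam i * p.eval (lam i) := by
  obtain ⟨c, hc, hLp⟩ := Lp_eq_C_mul_Mpoly lam hinj hroot
  set M := Mpoly N lam with hM
  set s := p /ₘ M with hs
  set r := p %ₘ M with hr
  have hsplit : p = M * s + r := by
    rw [hs, hr]
    have := Polynomial.modByMonic_add_div p M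
    linear_combination (norm := ring_nf) -this
  have hrdeg : r.natDegree < N := by
    have := Polynomial.degree_modByMonic_lt p (Mpoly_monic lam)
    rw [← hM] at this
    rcases eq_or_ne r 0 with h | h
    · rw [h, natDegree_zero]; omega
    · have h2 := (Polynomial.degree_eq_natDegree h) ▸ this
      rw [Polynomial.degree_eq_natDegree (Mpoly_monic lam).ne_zero, Mpoly_natDegree] at h2
      exact_mod_cast h2
  have hsdeg : s.natDegree < N := by
    rcases eq_or_ne s 0 with h | h
    · rw [h, natDegree_zero]; omega
    · have h1 : (M * s).natDegree = N + s.natDegree := by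
        rw [natDegree_mul (Mpoly_monic lam).ne_zero h, Mpoly_natDegree]
      have h2 : (M * s).natDegree ≤ max p.natDegree r.natDegree := by
        have : M * s = p - r := by rw [hsplit]; ring
        rw [this]
        exact (natDegree_sub_le _ _).trans (by omega)
      omega
  -- root property of M
  have hMroot : ∀ i, M.eval (lam i) = 0 := by
    intro i
    rw [hM, Mpoly, eval_prod]
    exact Finset.prod_eq_zero (Finset.mem_univ i) (by simp)
  -- integral of M * s is 0
  have hMs : (∫ x in (-1:ℝ)..1, (M * s).eval x) = 0 := by
    have hMc : M = C c⁻¹ * Lp N := by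
      rw [hLp, ← mul_assoc, ← _root_.map_mul, inv_mul_cancel₀ hc, _root_.map_one, one_mul]
    have : ∀ x : ℝ, (M * s).eval x = c⁻¹ * (s.eval x * (Lp N).eval x) := by
      intro x; rw [hMc]; simp; ring
    simp_rw [this, intervalIntegral.integral_const_mul, orth_Lp N s hsdeg, mul_zero]
  calc (∫ x in (-1:ℝ)..1, p.eval x)
      = (∫ x in (-1:ℝ)..1, (M * s).eval x) + ∫ x in (-1:ℝ)..1, r.eval x := by
        rw [← intervalIntegral.integral_add (poly_intble _ _ _) (poly_intble _ _ _)]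
        simp_rw [← eval_add, ← hsplit]
    _ = ∫ x in (-1:ℝ)..1, r.eval x := by rw [hMs, zero_add]
    _ = ∑ i : Fin N, christoffel N lam i * r.eval (lam i) := lagrange_exact hN lam hinj r hrdeg
    _ = ∑ i : Fin N, christoffel N lam i * p.eval (lam i) := by
        refine Finset.sum_congr rfl fun i _ => ?_
        rw [hsplit]
        simp [hMroot i]

-- substitution
lemma integral_cos_sub (p : ℝ[X]) :
    (∫ θ in (0:ℝ)..π, p.eval (Real.cos θ) * Real.sin θ) = ∫ x in (-1:ℝ)..1, p.eval x := by
  have h := intervalIntegral.integral_comp_smul_deriv (a := (0:ℝ)) (b := π)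
    (f := Real.cos) (f' := fun x => -Real.sin x) (g := fun x => p.eval x)
    (fun x _ => Real.hasDerivAt_cos x) (Continuous.continuousOn (by continuity))
    (Polynomial.continuous p)
  rw [Real.cos_zero, Real.cos_pi] at h
  have h2 : (∫ θ in (0:ℝ)..π, (-Real.sin θ) • ((fun x => p.eval x) ∘ Real.cos) θ)
      = - ∫ θ in (0:ℝ)..π, p.eval (Real.cos θ) * Real.sin θ := by
    rw [← intervalIntegral.integral_neg]
    congr 1; funext θ; simp [Function.comp]; ring
  have h3 : (∫ x in (1:ℝ)..(-1), p.eval x) = - ∫ x in (-1:ℝ)..1, p.eval x :=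
    intervalIntegral.integral_symm _ _
  rw [h2] at h
  rw [h3] at h
  linarith

-- geometric sum of roots of unity
lemma sum_exp_eq (M : ℕ) (hM : 0 < M) (m : ℤ) (hm : m ≠ 0) (hmlt : m.natAbs < M) :
    (∑ j ∈ Finset.range M, Complex.exp (Complex.I * m * ((2 * π * j / M : ℝ) : ℂ))) = 0 := by
  have hMne : (M : ℂ) ≠ 0 := by exact_mod_cast hM.ne'
  have hζ : ∀ j : ℕ, Complex.exp (Complex.I * m * ((2 * π * j / M : ℝ) : ℂ))
      = (Complex.exp (Complex.I * m * (2 * π / M))) ^ j := by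
    intro j
    rw [← Complex.exp_nat_mul]
    congr 1
    push_cast
    ring
  simp_rw [hζ]
  have hz1 : Complex.exp (Complex.I * m * (2 * π / M)) ≠ 1 := by
    intro h
    rw [Complex.exp_eq_one_iff] at h
    obtain ⟨t, ht⟩ := h
    have hI : Complex.I * ((m:ℂ) * (2 * π / M)) = Complex.I * ((t:ℂ) * (2 * π)) := by
      rw [← mul_assoc, ht]; ring
    have h2 := mul_left_cancel₀ Complex.I_ne_zero hI
    have h3 : (m : ℝ) * (2 * π / M) = (t : ℝ) * (2 * π) := by exact_mod_cast h2
    have hMr : (M : ℝ) ≠ 0 := by exact_mod_cast hM.ne'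
    have h4 : (m : ℝ) * (2 * π) = ((t * M : ℤ) : ℝ) * (2 * π) := by
      push_cast
      field_simp at h3
      linear_combination (2 * π) * h3
    have h5 : (m : ℝ) = ((t * M : ℤ) : ℝ) := by
      have : (2 * π : ℝ) ≠ 0 := by positivity
      exact mul_right_cancel₀ this h4
    have h6 : m = t * M := by exact_mod_cast h5
    have h7 : m.natAbs = t.natAbs * M := by rw [h6, Int.natAbs_mul]; simp
    rcases Nat.eq_zero_or_pos t.natAbs with h8 | h8
    · have : t = 0 := Int.natAbs_eq_zero.mp h8
      rw [this] at h6; simp at h6; exact hm h6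
    · nlinarith [hmlt, h7]
  rw [geom_sum_eq hz1 M]
  have hpow : Complex.exp (Complex.I * m * (2 * π / M)) ^ M = 1 := by
    rw [← Complex.exp_nat_mul]
    have : (M : ℂ) * (Complex.I * m * (2 * π / M)) = m * (2 * π * Complex.I) := by
      field_simp
    rw [this]
    exact Complex.exp_int_mul_two_pi_mul_I m
  rw [hpow, sub_self, zero_div]



lemma rpow_half_sq {y : ℝ} (hy : 0 ≤ y) (a : ℕ) :
    y ^ ((a:ℝ)/2) * y ^ ((a:ℝ)/2) = y ^ a := by
  rcases Nat.eq_zero_or_pos a with h | h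
  · subst h; simp
  · have hsum : (a:ℝ)/2 + (a:ℝ)/2 = (a:ℝ) := by ring
    have hne : (a:ℝ)/2 + (a:ℝ)/2 ≠ 0 := by
      rw [hsum]
      exact_mod_cast h.ne'
    rw [← Real.rpow_add' hy hne, hsum, Real.rpow_natCast]

noncomputable def QQ (n a : ℕ) : ℝ[X] := derivative^[a] (Lp n)

lemma normAssoc_eval (n a : ℕ) (x : ℝ) :
    normAssocLegendre n a x
      = Real.sqrt (((n - a).factorial : ℝ) / ((n + a).factorial : ℝ)) *
        (1 - x ^ 2) ^ ((a : ℝ) / 2) * (QQ n a).eval x := by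
  unfold normAssocLegendre QQ
  congr 2
  rw [show legendreP n = fun y => (Lp n).eval y from funext (legendreP_eq n),
    iteratedDeriv_polyEval]

noncomputable def gg (n : ℕ) (k : ℤ) (θ : ℝ) : ℝ :=
  Real.sqrt (2 * n + 1) * normAssocLegendre n k.natAbs (Real.cos θ)

lemma sphY_eq (n : ℕ) (k : ℤ) (θ φ : ℝ) :
    sphY n k θ φ = ((gg n k θ : ℝ) : ℂ) * Complex.exp (Complex.I * k * φ) := rfl

lemma continuous_gg (n : ℕ) (k : ℤ) : Continuous (gg n k) := by
  have : gg n k = fun θ =>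
      Real.sqrt (((n - k.natAbs).factorial : ℝ) / ((n + k.natAbs).factorial : ℝ)) *
        (1 - Real.cos θ ^ 2) ^ ((k.natAbs : ℝ) / 2) * (QQ n k.natAbs).eval (Real.cos θ)
        * Real.sqrt (2 * n + 1) := by
    funext θ; rw [gg, normAssoc_eval]; ring
  rw [this]
  have h1 : Continuous fun θ : ℝ => (1 - Real.cos θ ^ 2) ^ ((k.natAbs : ℝ) / 2) :=
    (Real.continuous_rpow_const (by positivity)).comp (by continuity)
  exact (((continuous_const.mul h1).mul
    ((Polynomial.continuous _).comp Real.continuous_cos)).mul continuous_const)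

lemma mul_conj_sphY (n' n : ℕ) (k' k : ℤ) (θ φ : ℝ) :
    sphY n' k' θ φ * conj (sphY n k θ φ)
      = ((gg n' k' θ * gg n k θ : ℝ) : ℂ) * Complex.exp (Complex.I * (k' - k) * φ) := by
  rw [sphY_eq, sphY_eq, _root_.map_mul, Complex.conj_ofReal]
  have hc : conj (Complex.exp (Complex.I * k * φ)) = Complex.exp (-(Complex.I * k * φ)) := by
    rw [← Complex.exp_conj]
    congr 1
    simp [_root_.map_mul, Complex.conj_I, Complex.conj_ofReal]
  rw [hc, mul_mul_mul_comm, ← Complex.exp_add]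
  push_cast
  ring_nf

noncomputable def GP (n' n a : ℕ) : ℝ[X] :=
  C (Real.sqrt (2 * n' + 1) * Real.sqrt (2 * n + 1) *
      Real.sqrt (((n' - a).factorial : ℝ) / ((n' + a).factorial : ℝ)) *
      Real.sqrt (((n - a).factorial : ℝ) / ((n + a).factorial : ℝ))) *
    ((1 - X ^ 2) ^ a * (QQ n' a * QQ n a))

lemma gg_mul_gg (n' n : ℕ) (k' k : ℤ) (hkk : k'.natAbs = k.natAbs) (θ : ℝ) :
    gg n' k' θ * gg n k θ = (GP n' n k.natAbs).eval (Real.cos θ) := by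
  rw [gg, gg, hkk, normAssoc_eval, normAssoc_eval, GP]
  have h1 : (0:ℝ) ≤ 1 - Real.cos θ ^ 2 := by nlinarith [Real.neg_one_le_cos θ, Real.cos_le_one θ]
  simp only [eval_mul, eval_C, eval_pow, eval_sub, eval_one, eval_X]
  rw [← rpow_half_sq h1 k.natAbs]
  ring

lemma natDegree_GP (n' n a : ℕ) (ha' : a ≤ n') (ha : a ≤ n) :
    (GP n' n a).natDegree ≤ n' + n := by
  have hQ : ∀ m, (QQ m a).natDegree ≤ m - a := fun m => by
    have := natDegree_iterate_derivative (Lp m) a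
    rwa [natDegree_Lp] at this
  have h2 : ((1 - X ^ 2 : ℝ[X])).natDegree ≤ 2 :=
    le_trans (natDegree_sub_le _ _) (by simp)
  have h3 : ((1 - X ^ 2 : ℝ[X]) ^ a).natDegree ≤ 2 * a :=
    le_trans (natDegree_pow_le) (by nlinarith)
  calc (GP n' n a).natDegree
      ≤ (C _).natDegree + ((1 - X ^ 2) ^ a * (QQ n' a * QQ n a) : ℝ[X]).natDegree :=
        natDegree_mul_le
    _ ≤ 0 + (((1 - X ^ 2 : ℝ[X]) ^ a).natDegree + (QQ n' a * QQ n a).natDegree) := by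
        rw [natDegree_C]; exact Nat.add_le_add le_rfl natDegree_mul_le
    _ ≤ 0 + (2 * a + ((QQ n' a).natDegree + (QQ n a).natDegree)) := by
        exact Nat.add_le_add le_rfl (Nat.add_le_add h3 natDegree_mul_le)
    _ ≤ 2 * a + ((n' - a) + (n - a)) := by
        have := hQ n'; have := hQ n; omega
    _ ≤ n' + n := by omega

lemma integral_exp_phi (m : ℤ) (hm : m ≠ 0) :
    (∫ φ in (0:ℝ)..(2 * π), Complex.exp (Complex.I * m * (φ:ℂ))) = 0 := by
  have hc : (Complex.I * m : ℂ) ≠ 0 :=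
    mul_ne_zero Complex.I_ne_zero (by exact_mod_cast hm)
  have h := integral_exp_mul_complex (a := 0) (b := 2 * π) hc
  simp_rw [mul_assoc] at h ⊢
  rw [h]
  have h1 : Complex.exp (Complex.I * ((m : ℂ) * ((2 * π : ℝ) : ℂ))) = 1 := by
    have : Complex.I * ((m : ℂ) * ((2 * π : ℝ) : ℂ)) = (m : ℂ) * (2 * π * Complex.I) := by
      push_cast; ring
    rw [this]
    exact Complex.exp_int_mul_two_pi_mul_I m
  rw [h1]
  norm_num



noncomputable def Tval (n' n : ℕ) (k' k : ℤ) : ℝ :=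
  ∫ θ in (0:ℝ)..π, gg n' k' θ * gg n k θ * Real.sin θ

lemma inner_integral (n' n : ℕ) (k' k : ℤ) (φ : ℝ) :
    (∫ θ in (0:ℝ)..π, sphY n' k' θ φ * conj (sphY n k θ φ) * (Real.sin θ : ℂ))
      = Complex.exp (Complex.I * (↑k' - ↑k) * φ) * ((Tval n' n k' k : ℝ) : ℂ) := by
  have heq : (fun θ => sphY n' k' θ φ * conj (sphY n k θ φ) * (Real.sin θ : ℂ))
      = fun θ => Complex.exp (Complex.I * (↑k' - ↑k) * φ) *
          ((gg n' k' θ * gg n k θ * Real.sin θ : ℝ) : ℂ) := by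
    funext θ
    rw [mul_conj_sphY]
    push_cast
    ring
  rw [heq, intervalIntegral.integral_const_mul, intervalIntegral.integral_ofReal]
  rfl

lemma pair {N : ℕ} (hN : 1 ≤ N) (lam : Fin N → ℝ)
    (hmem : ∀ i, lam i ∈ Set.Ioo (-1 : ℝ) 1)
    (hroot : ∀ i, (Lp N).eval (lam i) = 0) (hinj : Function.Injective lam)
    (n' n : ℕ) (hn' : n' < N) (hn : n < N) (k' k : ℤ)
    (hk' : k'.natAbs ≤ n') (hk : k.natAbs ≤ n) :
    (1 / (4 * π) : ℂ) *
      ((∫ φ in (0:ℝ)..(2 * π), Complex.exp (Complex.I * (↑k' - ↑k) * (φ:ℂ))) *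
        ((Tval n' n k' k : ℝ) : ℂ))
    = ∑ i : Fin N, ∑ j ∈ Finset.range (2 * N + 1),
        sphY n' k' (Real.arccos (lam i)) (2 * π * j / (2 * N + 1)) *
        conj (sphY n k (Real.arccos (lam i)) (2 * π * j / (2 * N + 1))) *
        ((christoffel N lam i / (2 * (2 * N + 1)) : ℝ) : ℂ) := by
  have hpi : (π : ℝ) ≠ 0 := Real.pi_ne_zero
  -- rewrite the discrete side
  have hD : ∀ (i : Fin N) (j : ℕ),
      sphY n' k' (Real.arccos (lam i)) (2 * π * j / (2 * N + 1)) *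
        conj (sphY n k (Real.arccos (lam i)) (2 * π * j / (2 * N + 1))) *
        ((christoffel N lam i / (2 * (2 * N + 1)) : ℝ) : ℂ)
      = ((gg n' k' (Real.arccos (lam i)) * gg n k (Real.arccos (lam i)) *
            (christoffel N lam i / (2 * (2 * N + 1))) : ℝ) : ℂ) *
          Complex.exp (Complex.I * (↑k' - ↑k) * ((2 * π * j / (2 * N + 1) : ℝ) : ℂ)) := by
    intro i j
    rw [mul_conj_sphY]
    push_cast
    ring
  simp_rw [hD, ← Finset.mul_sum]
  by_cases hm0 : (k' : ℤ) - k = 0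
  · -- diagonal case
    have hkk : k' = k := by omega
    have hka : k'.natAbs = k.natAbs := by rw [hkk]
    have he : ∀ x : ℂ, Complex.exp (Complex.I * (↑k' - ↑k) * x) = 1 := by
      intro x
      have h0 : ((k' : ℂ) - k) = 0 := by rw [hkk]; ring
      rw [h0]
      simp
    simp_rw [he]
    rw [intervalIntegral.integral_const, sub_zero, Complex.real_smul, mul_one]
    simp only [Finset.sum_const, Finset.card_range, nsmul_eq_mul, mul_one]
    have hT : Tval n' n k' k = ∑ i : Fin N, christoffel N lam i *
        (GP n' n k.natAbs).eval (lam i) := by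
      have hfun : (fun θ => gg n' k' θ * gg n k θ * Real.sin θ)
          = fun θ => (GP n' n k.natAbs).eval (Real.cos θ) * Real.sin θ := by
        funext θ; rw [gg_mul_gg n' n k' k hka]
      rw [Tval, hfun, integral_cos_sub]
      exact gauss_exact hN lam hinj hroot _ (by
        have := natDegree_GP n' n k.natAbs (hka ▸ hk') hk
        omega)
    have hGi : ∀ i : Fin N, gg n' k' (Real.arccos (lam i)) * gg n k (Real.arccos (lam i))
        = (GP n' n k.natAbs).eval (lam i) := by
      intro i
      rw [gg_mul_gg n' n k' k hka, Real.cos_arccos (hmem i).1.le (hmem i).2.le]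
    have hc1 : (2 * (N:ℝ) + 1) ≠ 0 := by positivity
    have hreal : Tval n' n k' k * (2 * π) / (4 * π)
        = ∑ i : Fin N, gg n' k' (Real.arccos (lam i)) * gg n k (Real.arccos (lam i)) *
            (christoffel N lam i / (2 * (2 * (N:ℝ) + 1))) * ((2 * N + 1 : ℕ) : ℝ) := by
      have hL2 : Tval n' n k' k * (2 * π) / (4 * π) = Tval n' n k' k / 2 := by
        field_simp
        ring
      rw [hL2, hT, Finset.sum_div]
      refine Finset.sum_congr rfl fun i _ => ?_
      rw [hGi i]
      push_cast
      field_simp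
    have hπc : (π:ℂ) ≠ 0 := by exact_mod_cast hpi
    calc (1 / (4 * (π:ℂ))) * (((2 * π : ℝ):ℂ) * ((Tval n' n k' k : ℝ):ℂ))
        = ((Tval n' n k' k * (2 * π) / (4 * π) : ℝ) : ℂ) := by
          push_cast
          field_simp
      _ = ∑ i : Fin N, ((gg n' k' (Real.arccos (lam i)) * gg n k (Real.arccos (lam i)) *
            (christoffel N lam i / (2 * (2 * (N:ℝ) + 1))) : ℝ) : ℂ) * ((2 * N + 1 : ℕ) : ℂ) := by
          rw [hreal]
          push_cast
          rfl
  · -- off-diagonal: both sides vanish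
    have hL : (∫ φ in (0:ℝ)..(2 * π), Complex.exp (Complex.I * (↑k' - ↑k) * (φ:ℂ))) = 0 := by
      have := integral_exp_phi (k' - k) hm0
      simp_rw [Int.cast_sub] at this
      exact this
    have hS : (∑ j ∈ Finset.range (2 * N + 1),
        Complex.exp (Complex.I * (↑k' - ↑k) * ((2 * π * j / (2 * N + 1) : ℝ) : ℂ))) = 0 := by
      have hmlt : (k' - k).natAbs < 2 * N + 1 := by omega
      have := sum_exp_eq (2 * N + 1) (by omega) (k' - k) hm0 hmlt
      simp_rw [Int.cast_sub] at this
      have hcast : ∀ j : ℕ, ((2 * π * j / ((2 * N + 1 : ℕ) : ℝ) : ℝ) : ℂ)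
          = ((2 * π * j / (2 * (N:ℝ) + 1) : ℝ) : ℂ) := by
        intro j; norm_num
      simp_rw [hcast] at this
      exact this
    rw [hL]
    simp_rw [hS, mul_zero, Finset.sum_const_zero]
    ring



lemma integral_double_sum {s : Finset ℕ} {t : ℕ → Finset ℤ} (f : ℕ → ℤ → ℝ → ℂ) {a b : ℝ}
    (hf : ∀ n' ∈ s, ∀ k' ∈ t n', IntervalIntegrable (f n' k') MeasureTheory.volume a b) :
    (∫ x in a..b, ∑ n' ∈ s, ∑ k' ∈ t n', f n' k' x)
      = ∑ n' ∈ s, ∑ k' ∈ t n', ∫ x in a..b, f n' k' x := by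
  have hi : ∀ n' ∈ s, IntervalIntegrable (fun x => ∑ k' ∈ t n', f n' k' x)
      MeasureTheory.volume a b := by
    intro n' hn'
    have := IntervalIntegrable.sum (μ := MeasureTheory.volume) (a := a) (b := b) (t n')
      (fun k' hk' => hf n' hn' k' hk')
    have he : (∑ k' ∈ t n', f n' k') = fun x => ∑ k' ∈ t n', f n' k' x := by
      funext x; simp
    rwa [he] at this
  rw [intervalIntegral.integral_finset_sum (f := fun n' x => ∑ k' ∈ t n', f n' k' x) hi]
  exact Finset.sum_congr rfl fun n' hn' =>
    intervalIntegral.integral_finset_sum (fun k' hk' => hf n' hn' k' hk')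


end AuxDCE

section MainDCE
open Polynomial intervalIntegral

/-- Exactness of the discrete quadrature: for every spherical polynomial
`Y = Σ_{n<N} Σ_{|k|≤n} c_{nk} Y_{nk}` of degree at most `N-1`, the continuous
Laplace–Fourier coefficients equal the discrete ones. -/
theorem discrete_coefficients_exact (N : ℕ) (hN : 1 ≤ N) (lam : Fin N → ℝ)
    (hmem : ∀ i, lam i ∈ Set.Ioo (-1 : ℝ) 1)
    (hroot : ∀ i, legendreP N (lam i) = 0) (hinj : Function.Injective lam)
    (c : ℕ → ℤ → ℂ) (n : ℕ) (hn : n < N) (k : ℤ) (hk : k.natAbs ≤ n) :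
    sphInner
        (fun θ φ => ∑ n' ∈ Finset.range N, ∑ k' ∈ Finset.Icc (-(n':ℤ)) (n':ℤ),
          c n' k' * sphY n' k' θ φ)
        (sphY n k)
      = ∑ i : Fin N, ∑ j ∈ Finset.range (2 * N + 1),
          (∑ n' ∈ Finset.range N, ∑ k' ∈ Finset.Icc (-(n':ℤ)) (n':ℤ),
            c n' k' * sphY n' k' (Real.arccos (lam i)) (2 * π * j / (2 * N + 1))) *
          conj (sphY n k (Real.arccos (lam i)) (2 * π * j / (2 * N + 1))) *
          ((christoffel N lam i / (2 * (2 * N + 1)) : ℝ) : ℂ) := by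
  have hroot' : ∀ i, (Lp N).eval (lam i) = 0 := fun i => by
    rw [← legendreP_eq]; exact hroot i
  have hcontθ : ∀ (n' : ℕ) (k' : ℤ) (φ : ℝ),
      Continuous (fun θ => sphY n' k' θ φ * conj (sphY n k θ φ) * (Real.sin θ : ℂ)) := by
    intro n' k' φ
    have : (fun θ => sphY n' k' θ φ * conj (sphY n k θ φ) * (Real.sin θ : ℂ))
        = fun θ => ((gg n' k' θ * gg n k θ : ℝ) : ℂ) *
            Complex.exp (Complex.I * (↑k' - ↑k) * φ) * ((Real.sin θ : ℝ) : ℂ) := by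
      funext θ; rw [mul_conj_sphY]
    rw [this]
    exact ((Complex.continuous_ofReal.comp
      ((continuous_gg _ _).mul (continuous_gg _ _))).mul continuous_const).mul
      (Complex.continuous_ofReal.comp Real.continuous_sin)
  -- inner integral computation for the summed integrand
  have hint : ∀ φ : ℝ, (∫ θ in (0:ℝ)..π,
      (∑ n' ∈ Finset.range N, ∑ k' ∈ Finset.Icc (-(n':ℤ)) (n':ℤ),
        c n' k' * sphY n' k' θ φ) * conj (sphY n k θ φ) * (Real.sin θ : ℂ))
      = ∑ n' ∈ Finset.range N, ∑ k' ∈ Finset.Icc (-(n':ℤ)) (n':ℤ),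
          c n' k' * (Complex.exp (Complex.I * (↑k' - ↑k) * φ) * ((Tval n' n k' k : ℝ) : ℂ)) := by
    intro φ
    have heq : (fun θ => (∑ n' ∈ Finset.range N, ∑ k' ∈ Finset.Icc (-(n':ℤ)) (n':ℤ),
        c n' k' * sphY n' k' θ φ) * conj (sphY n k θ φ) * (Real.sin θ : ℂ))
        = fun θ => ∑ n' ∈ Finset.range N, ∑ k' ∈ Finset.Icc (-(n':ℤ)) (n':ℤ),
            c n' k' * (sphY n' k' θ φ * conj (sphY n k θ φ) * (Real.sin θ : ℂ)) := by
      funext θ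
      rw [Finset.sum_mul, Finset.sum_mul]
      refine Finset.sum_congr rfl fun n' _ => ?_
      rw [Finset.sum_mul, Finset.sum_mul]
      exact Finset.sum_congr rfl fun k' _ => by ring
    rw [heq, integral_double_sum (fun n' k' θ => c n' k' * (sphY n' k' θ φ * conj (sphY n k θ φ) * (Real.sin θ : ℂ))) (fun n' _ k' _ =>
      (continuous_const.mul (hcontθ n' k' φ)).intervalIntegrable _ _)]
    refine Finset.sum_congr rfl fun n' _ => Finset.sum_congr rfl fun k' _ => ?_
    rw [intervalIntegral.integral_const_mul, inner_integral]
  rw [sphInner]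
  simp_rw [hint]
  -- swap outer integral with sums
  have hcontφ : ∀ (n' : ℕ) (k' : ℤ), Continuous (fun φ : ℝ =>
      c n' k' * (Complex.exp (Complex.I * (↑k' - ↑k) * (φ:ℂ)) * ((Tval n' n k' k : ℝ) : ℂ))) := by
    intro n' k'
    exact continuous_const.mul ((Complex.continuous_exp.comp (by continuity)).mul
      continuous_const)
  rw [integral_double_sum _ (fun n' _ k' _ => (hcontφ n' k').intervalIntegrable _ _)]
  trans (∑ n' ∈ Finset.range N, ∑ k' ∈ Finset.Icc (-(n':ℤ)) (n':ℤ), c n' k' *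
      ∑ i : Fin N, ∑ j ∈ Finset.range (2 * N + 1),
        sphY n' k' (Real.arccos (lam i)) (2 * π * j / (2 * N + 1)) *
        conj (sphY n k (Real.arccos (lam i)) (2 * π * j / (2 * N + 1))) *
        ((christoffel N lam i / (2 * (2 * N + 1)) : ℝ) : ℂ))
  · rw [Finset.mul_sum]
    refine Finset.sum_congr rfl fun n' hn' => ?_
    rw [Finset.mul_sum]
    refine Finset.sum_congr rfl fun k' hk' => ?_
    have hkn' : k'.natAbs ≤ n' := by
      have := Finset.mem_Icc.mp hk'
      omega
    have hn'N : n' < N := Finset.mem_range.mp hn'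
    have hφ : (∫ φ in (0:ℝ)..(2*π),
        c n' k' * (Complex.exp (Complex.I * (↑k' - ↑k) * (φ:ℂ)) * ((Tval n' n k' k : ℝ) : ℂ)))
        = c n' k' * (((∫ φ in (0:ℝ)..(2*π), Complex.exp (Complex.I * (↑k' - ↑k) * (φ:ℂ)))) *
            ((Tval n' n k' k : ℝ) : ℂ)) := by
      have heq2 : (fun φ : ℝ => c n' k' * (Complex.exp (Complex.I * (↑k' - ↑k) * (φ:ℂ)) *
          ((Tval n' n k' k : ℝ) : ℂ)))
          = fun φ : ℝ => (c n' k' * ((Tval n' n k' k : ℝ) : ℂ)) *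
              Complex.exp (Complex.I * (↑k' - ↑k) * (φ:ℂ)) := by
        funext φ; ring
      rw [heq2, intervalIntegral.integral_const_mul]
      ring
    rw [hφ, ← pair hN lam hmem hroot' hinj n' n hn'N hn k' k hkn' hk]
    push_cast
    ring
  · -- RHS manipulation
    have hDterm : ∀ (i : Fin N) (j : ℕ),
        (∑ n' ∈ Finset.range N, ∑ k' ∈ Finset.Icc (-(n':ℤ)) (n':ℤ),
          c n' k' * sphY n' k' (Real.arccos (lam i)) (2 * π * j / (2 * N + 1))) *
        conj (sphY n k (Real.arccos (lam i)) (2 * π * j / (2 * N + 1))) *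
        ((christoffel N lam i / (2 * (2 * N + 1)) : ℝ) : ℂ)
        = ∑ n' ∈ Finset.range N, ∑ k' ∈ Finset.Icc (-(n':ℤ)) (n':ℤ),
            c n' k' * (sphY n' k' (Real.arccos (lam i)) (2 * π * j / (2 * N + 1)) *
              conj (sphY n k (Real.arccos (lam i)) (2 * π * j / (2 * N + 1))) *
              ((christoffel N lam i / (2 * (2 * N + 1)) : ℝ) : ℂ)) := by
      intro i j
      rw [Finset.sum_mul, Finset.sum_mul]
      refine Finset.sum_congr rfl fun n' _ => ?_
      rw [Finset.sum_mul, Finset.sum_mul]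
      exact Finset.sum_congr rfl fun k' _ => by ring
    calc (∑ n' ∈ Finset.range N, ∑ k' ∈ Finset.Icc (-(n':ℤ)) (n':ℤ), c n' k' *
        ∑ i : Fin N, ∑ j ∈ Finset.range (2 * N + 1),
          sphY n' k' (Real.arccos (lam i)) (2 * π * j / (2 * N + 1)) *
          conj (sphY n k (Real.arccos (lam i)) (2 * π * j / (2 * N + 1))) *
          ((christoffel N lam i / (2 * (2 * N + 1)) : ℝ) : ℂ))
        = ∑ n' ∈ Finset.range N, ∑ k' ∈ Finset.Icc (-(n':ℤ)) (n':ℤ),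
            ∑ i : Fin N, ∑ j ∈ Finset.range (2 * N + 1),
              c n' k' * (sphY n' k' (Real.arccos (lam i)) (2 * π * j / (2 * N + 1)) *
                conj (sphY n k (Real.arccos (lam i)) (2 * π * j / (2 * N + 1))) *
                ((christoffel N lam i / (2 * (2 * N + 1)) : ℝ) : ℂ)) := by
          refine Finset.sum_congr rfl fun n' _ => Finset.sum_congr rfl fun k' _ => ?_
          rw [Finset.mul_sum]
          exact Finset.sum_congr rfl fun i _ => by rw [Finset.mul_sum]
      _ = ∑ i : Fin N, ∑ j ∈ Finset.range (2 * N + 1),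
            ∑ n' ∈ Finset.range N, ∑ k' ∈ Finset.Icc (-(n':ℤ)) (n':ℤ),
              c n' k' * (sphY n' k' (Real.arccos (lam i)) (2 * π * j / (2 * N + 1)) *
                conj (sphY n k (Real.arccos (lam i)) (2 * π * j / (2 * N + 1))) *
                ((christoffel N lam i / (2 * (2 * N + 1)) : ℝ) : ℂ)) := by
          trans (∑ n' ∈ Finset.range N, ∑ i : Fin N, ∑ j ∈ Finset.range (2 * N + 1),
              ∑ k' ∈ Finset.Icc (-(n':ℤ)) (n':ℤ),
              c n' k' * (sphY n' k' (Real.arccos (lam i)) (2 * π * j / (2 * N + 1)) *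
                conj (sphY n k (Real.arccos (lam i)) (2 * π * j / (2 * N + 1))) *
                ((christoffel N lam i / (2 * (2 * N + 1)) : ℝ) : ℂ)))
          · refine Finset.sum_congr rfl fun n' _ => ?_
            rw [Finset.sum_comm]
            exact Finset.sum_congr rfl fun i _ => Finset.sum_comm
          · rw [Finset.sum_comm]
            exact Finset.sum_congr rfl fun i _ => Finset.sum_comm
      _ = ∑ i : Fin N, ∑ j ∈ Finset.range (2 * N + 1),
            (∑ n' ∈ Finset.range N, ∑ k' ∈ Finset.Icc (-(n':ℤ)) (n':ℤ),
              c n' k' * sphY n' k' (Real.arccos (lam i)) (2 * π * j / (2 * N + 1))) *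
            conj (sphY n k (Real.arccos (lam i)) (2 * π * j / (2 * N + 1))) *
            ((christoffel N lam i / (2 * (2 * N + 1)) : ℝ) : ℂ) := by
          exact Finset.sum_congr rfl fun i _ => Finset.sum_congr rfl fun j _ =>
            (hDterm i j).symm

end MainDCE
end

section
/- Spanning property: if m_j ≤ N, then the functions φ_j(·, ξ_{lm}), as ξ_{lm} ranges over the N(2N+1) discretization points X' on the sphere, span the space V_j = ⊕_{n=0}^{m_j-1} H_n; indeed every f ∈ V_j satisfies f(ξ) = Σ_{l,m} f(ξ_{lm}) φ_j(ξ, ξ_{lm}) μ_N(ξ_{lm}). -/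
open scoped Real ComplexConjugate
open Finset Matrix

open Polynomial in
lemma Nat.descFactorial_cast_pos {n k : ℕ} (hk : k ≤ n) : (0:ℝ) < (n.descFactorial k : ℝ) := by
  have : n.descFactorial k ≠ 0 := by
    intro h; exact absurd (Nat.descFactorial_eq_zero_iff_lt.mp h) (by omega)
  exact_mod_cast Nat.pos_of_ne_zero this

namespace SphAux

open Polynomial

/-- Rodrigues polynomial bits -/
noncomputable def rod (n : ℕ) : ℝ[X] := ((X ^ 2 - 1) ^ n : ℝ[X])

noncomputable def legQ (n : ℕ) : ℝ[X] :=
  Polynomial.C (1 / (2 ^ n * n.factorial : ℝ)) * derivative^[n] (rod n)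

lemma iteratedDeriv_eval (p : ℝ[X]) (k : ℕ) :
    iteratedDeriv k (fun x => p.eval x) = fun x => (derivative^[k] p).eval x := by
  induction k with
  | zero => simp
  | succ k ih =>
    rw [iteratedDeriv_succ, ih, Function.iterate_succ_apply']
    funext x
    exact Polynomial.deriv _

lemma legendreP_eq (n : ℕ) : legendreP n = fun x => (legQ n).eval x := by
  funext x
  have h : (fun y : ℝ => (y ^ 2 - 1) ^ n) = fun y => (rod n).eval y := by
    funext y; simp [rod]
  rw [legendreP, h, iteratedDeriv_eval]
  simp [legQ]

lemma rod_natDegree (n : ℕ) : (rod n).natDegree = 2 * n := by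
  have h2 : ((X ^ 2 - 1 : ℝ[X])).natDegree = 2 := by
    have := Polynomial.natDegree_X_pow_sub_C (n := 2) (r := (1:ℝ))
    simpa using this
  rw [rod, Polynomial.natDegree_pow, h2, mul_comm]

lemma rod_monic (n : ℕ) : (rod n).Monic := by
  have h : ((X ^ 2 - 1 : ℝ[X])).Monic := by
    have := Polynomial.monic_X_pow_sub_C (1:ℝ) (two_ne_zero)
    simpa using this
  exact h.pow _

lemma rod_coeff_top (n : ℕ) : (rod n).coeff (2 * n) = 1 := by
  have := (rod_monic n).leadingCoeff
  rwa [Polynomial.leadingCoeff, rod_natDegree] at this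

/-- leading coefficient value of legQ -/
noncomputable def alead (n : ℕ) : ℝ :=
  ((2 * n).descFactorial n : ℝ) / (2 ^ n * n.factorial)

lemma alead_pos (n : ℕ) : 0 < alead n := by
  apply div_pos
  · exact Nat.descFactorial_cast_pos (by omega)
  · positivity

lemma legQ_coeff_top (n : ℕ) : (legQ n).coeff n = alead n := by
  rw [legQ, Polynomial.coeff_C_mul, Polynomial.coeff_iterate_derivative]
  have h : n + n = 2 * n := by omega
  rw [h, rod_coeff_top, alead]
  simp [smul_eq_mul, div_eq_mul_inv, mul_comm]

lemma legQ_natDegree_le (n : ℕ) : (legQ n).natDegree ≤ n := by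
  refine le_trans (Polynomial.natDegree_mul_le) ?_
  simp only [Polynomial.natDegree_C, zero_add]
  refine le_trans (Polynomial.natDegree_iterate_derivative _ _) ?_
  rw [rod_natDegree]; omega

lemma legQ_natDegree (n : ℕ) : (legQ n).natDegree = n := by
  refine le_antisymm (legQ_natDegree_le n) ?_
  exact Polynomial.le_natDegree_of_ne_zero (by rw [legQ_coeff_top]; exact (alead_pos n).ne')

lemma iterate_legQ_coeff (n k : ℕ) (hk : k ≤ n) :
    (derivative^[k] (legQ n)).coeff (n - k) = (n.descFactorial k : ℝ) * alead n := by
  rw [Polynomial.coeff_iterate_derivative]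
  have h : n - k + k = n := by omega
  rw [h, legQ_coeff_top, nsmul_eq_mul]

lemma iterate_legQ_natDegree (n k : ℕ) (hk : k ≤ n) :
    (derivative^[k] (legQ n)).natDegree = n - k := by
  refine le_antisymm ?_ ?_
  · refine le_trans (Polynomial.natDegree_iterate_derivative _ _) ?_
    rw [legQ_natDegree]
  · refine Polynomial.le_natDegree_of_ne_zero ?_
    rw [iterate_legQ_coeff n k hk]
    exact (mul_pos (Nat.descFactorial_cast_pos hk) (alead_pos n)).ne'

end SphAux
namespace SphAux
open Polynomial intervalIntegral

lemma poly_intable (p : ℝ[X]) (a b : ℝ) :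
    IntervalIntegrable (fun x => p.eval x) MeasureTheory.volume a b :=
  p.continuous.intervalIntegrable a b

lemma poly_ftc (p : ℝ[X]) :
    ∫ x in (-1:ℝ)..1, (derivative p).eval x = p.eval 1 - p.eval (-1) := by
  refine integral_eq_sub_of_hasDerivAt (fun x _ => p.hasDerivAt x) ?_
  exact poly_intable _ _ _

lemma poly_ibp (p q : ℝ[X]) :
    ∫ x in (-1:ℝ)..1, (derivative p).eval x * q.eval x =
      p.eval 1 * q.eval 1 - p.eval (-1) * q.eval (-1) -
        ∫ x in (-1:ℝ)..1, p.eval x * (derivative q).eval x := by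
  have h := poly_ftc (p * q)
  rw [derivative_mul] at h
  have hsplit : ∫ x in (-1:ℝ)..1, (derivative p * q + p * derivative q).eval x =
      (∫ x in (-1:ℝ)..1, (derivative p).eval x * q.eval x) +
        ∫ x in (-1:ℝ)..1, p.eval x * (derivative q).eval x := by
    rw [← intervalIntegral.integral_add]
    · simp only [eval_add, eval_mul]
    · simpa [eval_mul] using poly_intable (derivative p * q) (-1) 1
    · simpa [eval_mul] using poly_intable (p * derivative q) (-1) 1
  rw [hsplit] at h
  simp only [eval_mul] at h
  linarith

/-- iterated integration by parts; boundary vanishing hypotheses on `u`. -/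
lemma poly_ibp_iter (k : ℕ) (u w : ℝ[X])
    (hu : ∀ j, j < k → (derivative^[j] u).eval 1 = 0 ∧ (derivative^[j] u).eval (-1) = 0) :
    ∫ x in (-1:ℝ)..1, u.eval x * (derivative^[k] w).eval x =
      (-1:ℝ)^k * ∫ x in (-1:ℝ)..1, (derivative^[k] u).eval x * w.eval x := by
  induction k generalizing w with
  | zero => simp
  | succ k ih =>
    have h1 : ∫ x in (-1:ℝ)..1, u.eval x * (derivative^[k+1] w).eval x =
        (-1:ℝ)^k * ∫ x in (-1:ℝ)..1, (derivative^[k] u).eval x * (derivative w).eval x := by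
      rw [Function.iterate_succ_apply]
      exact ih (derivative w) (fun j hj => hu j (by omega))
    have h2 := poly_ibp (derivative^[k] u) w
    rw [← Function.iterate_succ_apply' derivative k u] at h2
    rw [h1, h2, (hu k (by omega)).1, (hu k (by omega)).2]
    ring

lemma rod_pow_dvd_iter (m j : ℕ) (r : ℝ[X]) (hj : j ≤ m) :
    ((X:ℝ[X]) ^ 2 - 1) ^ (m - j) ∣ derivative^[j] (((X:ℝ[X]) ^ 2 - 1) ^ m * r) := by
  induction j with
  | zero => simpa using Dvd.intro r rfl
  | succ j ih =>
    obtain ⟨t, ht⟩ := ih (by omega)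
    have hmj : m - j = (m - (j+1)) + 1 := by omega
    rw [Function.iterate_succ_apply', ht, hmj, derivative_mul, derivative_pow]
    rw [show (m - (j+1)) + 1 - 1 = m - (j+1) from by omega]
    refine dvd_add ⟨C (((m - (j+1)) + 1 : ℕ) : ℝ) * derivative ((X:ℝ[X])^2 - 1) * t, by
      push_cast; ring⟩ ⟨((X:ℝ[X])^2 - 1) * derivative t, by ring⟩

lemma eval_iter_deriv_rod_mul (m j : ℕ) (r : ℝ[X]) (hj : j < m) :
    (derivative^[j] (((X:ℝ[X]) ^ 2 - 1) ^ m * r)).eval 1 = 0 ∧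
      (derivative^[j] (((X:ℝ[X]) ^ 2 - 1) ^ m * r)).eval (-1) = 0 := by
  obtain ⟨t, ht⟩ := rod_pow_dvd_iter m j r (by omega)
  have hmj : m - j = (m - j - 1) + 1 := by omega
  constructor <;> · rw [ht, hmj]; simp [eval_pow]

/-- orthogonality of legQ n against lower-degree polynomials -/
lemma orth_low (n : ℕ) (s : ℝ[X]) (hs : s.natDegree < n) :
    ∫ x in (-1:ℝ)..1, s.eval x * (legQ n).eval x = 0 := by
  have key := poly_ibp_iter n (rod n) s
    (fun j hj => by
      simpa [rod, mul_one] using eval_iter_deriv_rod_mul n j 1 hj)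
  rw [Polynomial.iterate_derivative_eq_zero (by omega : s.natDegree < n)] at key
  simp only [eval_zero, mul_zero, intervalIntegral.integral_zero] at key
  have h0 : ∫ x in (-1:ℝ)..1, (derivative^[n] (rod n)).eval x * s.eval x = 0 := by
    rcases mul_eq_zero.mp key.symm with h | h
    · exact absurd h (pow_ne_zero n (by norm_num))
    · exact h
  have : ∫ x in (-1:ℝ)..1, s.eval x * (legQ n).eval x =
      (1 / (2 ^ n * n.factorial : ℝ)) *
        ∫ x in (-1:ℝ)..1, (derivative^[n] (rod n)).eval x * s.eval x := by
    rw [← intervalIntegral.integral_const_mul]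
    congr 1; funext x; simp [legQ]; ring
  rw [this, h0, mul_zero]

end SphAux
namespace SphAux
open Polynomial

lemma rod_eval (n : ℕ) (x : ℝ) : (rod n).eval x = (x^2-1)^n := by simp [rod]

lemma rod_step (n : ℕ) :
    (2*(n:ℝ)+3) * (∫ x in (-1:ℝ)..1, (rod (n+1)).eval x) +
      (2*(n:ℝ)+2) * (∫ x in (-1:ℝ)..1, (rod n).eval x) = 0 := by
  have hder : derivative ((X:ℝ[X]) * ((X^2-1)^(n+1))) =
      C (2*(n:ℝ)+3) * (X^2-1)^(n+1) + C (2*(n:ℝ)+2) * (X^2-1)^n := by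
    rw [derivative_mul, derivative_pow]
    simp only [derivative_X, Nat.add_sub_cancel, derivative_sub, derivative_one,
      derivative_X_pow, Nat.cast_add, Nat.cast_one]
    have hC3 : C (2*(n:ℝ)+3) = 2 * (n : ℝ[X]) + 3 := by
      rw [C_add, C_mul]; simp [map_ofNat, map_natCast]
    have hC2 : C (2*(n:ℝ)+2) = 2 * (n : ℝ[X]) + 2 := by
      rw [C_add, C_mul]; simp [map_ofNat, map_natCast]
    have hC1 : C ((n:ℝ)+1) = (n : ℝ[X]) + 1 := by
      rw [C_add]; simp [map_natCast]
    rw [hC3, hC2, hC1]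
    simp only [Nat.cast_ofNat, map_ofNat]
    ring
  have hftc := poly_ftc ((X:ℝ[X]) * ((X^2-1)^(n+1)))
  rw [hder] at hftc
  simp only [eval_add, eval_mul, eval_C, eval_pow, eval_sub, eval_X, eval_one] at hftc
  have i1 : IntervalIntegrable (fun x : ℝ => (2*(n:ℝ)+3) * (x^2-1)^(n+1))
      MeasureTheory.volume (-1) 1 := by
    apply Continuous.intervalIntegrable; continuity
  have i2 : IntervalIntegrable (fun x : ℝ => (2*(n:ℝ)+2) * (x^2-1)^n)
      MeasureTheory.volume (-1) 1 := by
    apply Continuous.intervalIntegrable; continuity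
  rw [intervalIntegral.integral_add i1 i2, intervalIntegral.integral_const_mul,
    intervalIntegral.integral_const_mul] at hftc
  simp only [rod_eval]
  norm_num at hftc
  linarith

lemma rod_int (n : ℕ) :
    ∫ x in (-1:ℝ)..1, (rod n).eval x =
      (-1:ℝ)^n * 2^(2*n+1) * (n.factorial)^2 / (2*n+1).factorial := by
  induction n with
  | zero => simp [rod]; norm_num
  | succ n ih =>
    have h := rod_step n
    have h3 : (2*(n:ℝ)+3) ≠ 0 := by positivity
    have key : (∫ x in (-1:ℝ)..1, (rod (n+1)).eval x) =
        -((2*(n:ℝ)+2) * (∫ x in (-1:ℝ)..1, (rod n).eval x)) / (2*(n:ℝ)+3) := by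
      field_simp
      linarith
    rw [key, ih]
    have hf1 : ((2*(n+1)+1).factorial : ℝ) = (2*(n:ℝ)+3) * ((2*(n:ℝ)+2) * ((2*n+1).factorial : ℝ)) := by
      have e : 2*(n+1)+1 = (2*n+1) + 1 + 1 := by ring
      rw [e, Nat.factorial_succ, Nat.factorial_succ]
      push_cast
      ring
    have hf2 : (((n+1).factorial : ℝ)) = ((n:ℝ) + 1) * (n.factorial : ℝ) := by
      rw [Nat.factorial_succ]; push_cast; ring
    have hfp : (0:ℝ) < ((2*n+1).factorial : ℝ) := by positivity
    have hnf : (0:ℝ) < (n.factorial : ℝ) := by positivity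
    rw [hf1, hf2]
    have hpow : (2:ℝ)^(2*(n+1)+1) = 4 * 2^(2*n+1) := by ring
    rw [hpow, pow_succ]
    field_simp
    ring
end SphAux
namespace SphAux
open Polynomial

lemma iterate_rod_top (n : ℕ) :
    derivative^[2*n] (rod n) = C (((2*n).factorial : ℝ)) := by
  have hdeg : (derivative^[2*n] (rod n)).natDegree ≤ 0 := by
    refine le_trans (Polynomial.natDegree_iterate_derivative _ _) ?_
    rw [rod_natDegree]; omega
  rw [Polynomial.eq_C_of_natDegree_le_zero hdeg, Polynomial.coeff_iterate_derivative]
  rw [zero_add, rod_coeff_top, Nat.descFactorial_self]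
  simp

lemma legQ_sq_int (n : ℕ) :
    ∫ x in (-1:ℝ)..1, (legQ n).eval x * (legQ n).eval x = 2 / (2*(n:ℝ)+1) := by
  set c : ℝ := 1 / (2 ^ n * n.factorial : ℝ) with hc
  have hstep1 : ∫ x in (-1:ℝ)..1, (legQ n).eval x * (legQ n).eval x =
      c * ∫ x in (-1:ℝ)..1, (derivative^[n] (rod n)).eval x * (legQ n).eval x := by
    rw [← intervalIntegral.integral_const_mul]
    congr 1; funext x; simp only [legQ, eval_mul, eval_C]; ring
  have hibp := poly_ibp_iter n (rod n) (legQ n)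
    (fun j hj => by simpa [rod, mul_one] using eval_iter_deriv_rod_mul n j 1 hj)
  have hDn : derivative^[n] (legQ n) = C (c * ((2*n).factorial : ℝ)) := by
    rw [legQ, Polynomial.iterate_derivative_C_mul, ← Function.iterate_add_apply]
    rw [show n + n = 2*n from by omega, iterate_rod_top, ← C_mul, hc]
  rw [hDn] at hibp
  have hval : ∫ x in (-1:ℝ)..1, (rod n).eval x * (C (c * ((2*n).factorial : ℝ)) : ℝ[X]).eval x =
      c * ((2*n).factorial : ℝ) * ((-1:ℝ)^n * 2^(2*n+1) * (n.factorial)^2 / (2*n+1).factorial) := by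
    simp only [eval_C]
    rw [← rod_int n, ← intervalIntegral.integral_const_mul]
    congr 1; funext x; ring
  rw [hval] at hibp
  have hIn : ∫ x in (-1:ℝ)..1, (derivative^[n] (rod n)).eval x * (legQ n).eval x =
      (-1:ℝ)^n * (c * ((2*n).factorial : ℝ) *
        ((-1:ℝ)^n * 2^(2*n+1) * (n.factorial)^2 / (2*n+1).factorial)) := by
    have h := hibp
    have hsq : ((-1:ℝ)^n) * ((-1:ℝ)^n) = 1 := by
      rw [← pow_add]; exact (neg_one_pow_eq_one_iff_even (by norm_num)).mpr ⟨n, by ring⟩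
    calc ∫ x in (-1:ℝ)..1, (derivative^[n] (rod n)).eval x * (legQ n).eval x
        = ((-1:ℝ)^n * (-1:ℝ)^n) * ∫ x in (-1:ℝ)..1,
            (derivative^[n] (rod n)).eval x * (legQ n).eval x := by rw [hsq, one_mul]
      _ = (-1:ℝ)^n * ((-1:ℝ)^n * ∫ x in (-1:ℝ)..1,
            (derivative^[n] (rod n)).eval x * (legQ n).eval x) := by ring
      _ = _ := by rw [← h]
  rw [hstep1, hIn]
  have hsq : ((-1:ℝ)^n) * ((-1:ℝ)^n) = 1 := by
    rw [← pow_add]; exact (neg_one_pow_eq_one_iff_even (by norm_num)).mpr ⟨n, by ring⟩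
  have hfact : ((2*n+1).factorial : ℝ) = (2*(n:ℝ)+1) * ((2*n).factorial : ℝ) := by
    rw [Nat.factorial_succ]; push_cast; ring
  have hp1 : (0:ℝ) < (n.factorial : ℝ) := by positivity
  have hp2 : (0:ℝ) < ((2*n).factorial : ℝ) := by positivity
  have hp3 : (0:ℝ) < 2*(n:ℝ)+1 := by positivity
  have hA : c * ((-1:ℝ)^n * (c * ((2*n).factorial:ℝ) *
      ((-1:ℝ)^n * 2^(2*n+1) * ((n.factorial:ℝ))^2 / ((2*n+1).factorial : ℝ)))) =
      (((-1:ℝ)^n)*((-1:ℝ)^n)) * ((c*c*((n.factorial:ℝ))^2) * 2^(2*n+1)) *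
        (((2*n).factorial:ℝ) / ((2*n+1).factorial : ℝ)) := by ring
  rw [hA, hsq, one_mul]
  have hcc : (c*c*((n.factorial:ℝ))^2) * 2^(2*n+1) = 2 := by
    rw [hc]
    have h2 : (2:ℝ)^(2*n+1) = 2 * (2^n * 2^n) := by
      rw [pow_add, two_mul, pow_add]; ring
    rw [h2]
    field_simp
  rw [hcc, hfact]
  rw [mul_comm (2*(n:ℝ)+1) _, div_mul_eq_div_div, div_self hp2.ne']
  rw [one_div, ← div_eq_mul_inv]

lemma int_mul_legQ (n : ℕ) (r : ℝ[X]) (hr : r.natDegree ≤ n) :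
    ∫ x in (-1:ℝ)..1, r.eval x * (legQ n).eval x =
      r.coeff n / alead n * (2 / (2*(n:ℝ)+1)) := by
  set s : ℝ[X] := r - C (r.coeff n / alead n) * legQ n with hs
  have hsplit : ∫ x in (-1:ℝ)..1, r.eval x * (legQ n).eval x =
      (∫ x in (-1:ℝ)..1, s.eval x * (legQ n).eval x) +
        (r.coeff n / alead n) * ∫ x in (-1:ℝ)..1, (legQ n).eval x * (legQ n).eval x := by
    have h1 := poly_intable (s * legQ n) (-1) 1
    have h2 := poly_intable (C (r.coeff n / alead n) * (legQ n * legQ n)) (-1) 1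
    rw [← intervalIntegral.integral_const_mul, ← intervalIntegral.integral_add
      (by simpa [eval_mul] using h1) (by simpa [eval_mul, mul_assoc] using h2)]
    congr 1; funext x; simp only [hs, eval_sub, eval_mul, eval_C]; ring
  have hzero : ∫ x in (-1:ℝ)..1, s.eval x * (legQ n).eval x = 0 := by
    by_cases h0 : s = 0
    · simp [h0]
    · refine orth_low n s ?_
      have hle : s.natDegree ≤ n := by
        refine le_trans (natDegree_sub_le _ _) (max_le hr ?_)
        refine le_trans natDegree_mul_le ?_
        simp [legQ_natDegree]
      have hcoeff : s.coeff n = 0 := by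
        simp only [hs, coeff_sub, coeff_C_mul, legQ_coeff_top]
        rw [div_mul_cancel₀ _ (alead_pos n).ne', sub_self]
      rcases lt_or_eq_of_le hle with h | h
      · exact h
      · exact absurd (by rw [← leadingCoeff_eq_zero, leadingCoeff, h, hcoeff]) h0
  rw [hsplit, hzero, zero_add, legQ_sq_int]

end SphAux
namespace SphAux
open Polynomial

lemma oneX_natDegree (k : ℕ) : (((1:ℝ[X]) - X^2)^k).natDegree = 2*k := by
  have h : ((1:ℝ[X]) - X^2) = -(X^2 - C 1) := by rw [Polynomial.C_1]; ring
  rw [natDegree_pow, h, natDegree_neg, natDegree_X_pow_sub_C, mul_comm]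

lemma oneX_leadingCoeff (k : ℕ) : (((1:ℝ[X]) - X^2)^k).leadingCoeff = (-1)^k := by
  have h : ((1:ℝ[X]) - X^2) = -(X^2 - C 1) := by rw [Polynomial.C_1]; ring
  rw [leadingCoeff_pow, h, leadingCoeff_neg]
  have hm : ((X:ℝ[X])^2 - C 1).Monic := monic_X_pow_sub_C (1:ℝ) (two_ne_zero)
  rw [hm.leadingCoeff]

lemma assoc_int_aux (n n' k : ℕ) (hk : k ≤ n) (hk' : k ≤ n') (hle : n' ≤ n) :
    ∫ x in (-1:ℝ)..1,
      (1-x^2)^k * ((derivative^[k] (legQ n)).eval x * (derivative^[k] (legQ n')).eval x)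
      = if n = n' then ((n+k).factorial : ℝ) / ((n-k).factorial) * (2 / (2*(n:ℝ)+1))
        else 0 := by
  set u : ℝ[X] := ((1:ℝ[X]) - X^2)^k * derivative^[k] (legQ n') with hu
  have hrw : ∫ x in (-1:ℝ)..1,
      (1-x^2)^k * ((derivative^[k] (legQ n)).eval x * (derivative^[k] (legQ n')).eval x) =
      ∫ x in (-1:ℝ)..1, u.eval x * (derivative^[k] (legQ n)).eval x := by
    congr 1; funext x; simp only [hu, eval_mul, eval_pow, eval_sub, eval_one, eval_X]; ring
  have hufac : u = ((X:ℝ[X])^2 - 1)^k * ((-1:ℝ[X])^k * derivative^[k] (legQ n')) := by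
    rw [hu]; ring_nf
    rw [show ((1:ℝ[X]) - X^2)^k = ((-1 : ℝ[X]) * (X^2 - 1))^k from by ring, mul_pow]
    ring
  have hbound : ∀ j, j < k → (derivative^[j] u).eval 1 = 0 ∧ (derivative^[j] u).eval (-1) = 0 := by
    intro j hj
    rw [hufac]
    exact eval_iter_deriv_rod_mul k j _ hj
  have hibp := poly_ibp_iter k u (legQ n) hbound
  rw [hrw, hibp]
  have hudeg : u.natDegree ≤ n' + k := by
    refine le_trans natDegree_mul_le ?_
    rw [oneX_natDegree]
    have := Polynomial.natDegree_iterate_derivative (legQ n') k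
    rw [legQ_natDegree] at this
    omega
  have hDudeg : (derivative^[k] u).natDegree ≤ n' := by
    refine le_trans (Polynomial.natDegree_iterate_derivative _ _) ?_
    omega
  rcases lt_or_eq_of_le hle with hlt | heq
  · rw [if_neg (by omega)]
    rw [orth_low n _ (by omega), mul_zero]
  · replace heq : n = n' := heq.symm
    subst heq
    rw [if_pos rfl]
    rw [int_mul_legQ n _ (hDudeg)]
    have hcoeff : (derivative^[k] u).coeff n =
        ((n+k).descFactorial k : ℝ) * ((-1:ℝ)^k * ((n.descFactorial k : ℝ) * alead n)) := by
      rw [Polynomial.coeff_iterate_derivative]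
      have hQdeg := iterate_legQ_natDegree n k hk
      have hQlead : (derivative^[k] (legQ n)).leadingCoeff =
          (n.descFactorial k : ℝ) * alead n := by
        rw [leadingCoeff, hQdeg, iterate_legQ_coeff n k hk]
      have hidx : n + k = (((1:ℝ[X]) - X^2)^k).natDegree + (derivative^[k] (legQ n)).natDegree := by
        rw [oneX_natDegree, hQdeg]; omega
      rw [hu, hidx, Polynomial.coeff_mul_degree_add_degree, oneX_leadingCoeff, hQlead,
        nsmul_eq_mul]
    rw [hcoeff]
    have hsq : ((-1:ℝ)^k) * ((-1:ℝ)^k) = 1 := by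
      rw [← pow_add]; exact (neg_one_pow_eq_one_iff_even (by norm_num)).mpr ⟨k, by ring⟩
    have hd1 : ((n+k).descFactorial k : ℝ) * ((n).factorial : ℝ) = ((n+k).factorial : ℝ) := by
      have h := Nat.factorial_mul_descFactorial (show k ≤ n + k by omega)
      rw [show n + k - k = n from by omega] at h
      rw [mul_comm]
      exact_mod_cast h
    have hd2 : ((n).descFactorial k : ℝ) * ((n-k).factorial : ℝ) = ((n).factorial : ℝ) := by
      have h := Nat.factorial_mul_descFactorial hk
      rw [mul_comm]
      exact_mod_cast h
    have hane := (alead_pos n).ne'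
    have hnkf : (0:ℝ) < ((n-k).factorial : ℝ) := by positivity
    have hdd : ((n+k).descFactorial k : ℝ) * (n.descFactorial k : ℝ) =
        ((n+k).factorial : ℝ) / ((n-k).factorial : ℝ) := by
      rw [eq_div_iff hnkf.ne']
      calc ((n+k).descFactorial k : ℝ) * (n.descFactorial k : ℝ) * ((n-k).factorial : ℝ)
          = ((n+k).descFactorial k : ℝ) * ((n.descFactorial k : ℝ) * ((n-k).factorial : ℝ)) := by
            ring
        _ = ((n+k).descFactorial k : ℝ) * ((n).factorial : ℝ) := by rw [hd2]
        _ = ((n+k).factorial : ℝ) := hd1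
    have key : ∀ (e a c D1 D2 : ℝ), a ≠ 0 → e * e = 1 →
        e * (D1 * (e * (D2 * a)) / a * c) = D1 * D2 * c := by
      intro e a c D1 D2 ha he
      rw [show D1 * (e * (D2 * a)) = (D1 * (e * D2)) * a from by ring,
        mul_div_cancel_right₀ _ ha]
      calc e * (D1 * (e * D2) * c) = (e * e) * (D1 * D2 * c) := by ring
        _ = D1 * D2 * c := by rw [he, one_mul]
    rw [key ((-1:ℝ)^k) (alead n) (2 / (2*(n:ℝ)+1)) (((n+k).descFactorial k : ℝ))
      ((n.descFactorial k : ℝ)) hane hsq, hdd]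

lemma assoc_int (n n' k : ℕ) (hk : k ≤ n) (hk' : k ≤ n') :
    ∫ x in (-1:ℝ)..1,
      (1-x^2)^k * ((derivative^[k] (legQ n)).eval x * (derivative^[k] (legQ n')).eval x)
      = if n = n' then ((n+k).factorial : ℝ) / ((n-k).factorial) * (2 / (2*(n:ℝ)+1))
        else 0 := by
  rcases le_total n' n with h | h
  · exact assoc_int_aux n n' k hk hk' h
  · have := assoc_int_aux n' n k hk' hk h
    rw [show (∫ x in (-1:ℝ)..1,
        (1-x^2)^k * ((derivative^[k] (legQ n)).eval x * (derivative^[k] (legQ n')).eval x)) =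
        ∫ x in (-1:ℝ)..1,
          (1-x^2)^k * ((derivative^[k] (legQ n')).eval x * (derivative^[k] (legQ n)).eval x)
        from by congr 1; funext x; ring, this]
    by_cases he : n = n'
    · subst he; simp
    · rw [if_neg (fun hh => he hh.symm), if_neg he]

end SphAux
namespace SphAux
open Polynomial

lemma christoffel_eq (N : ℕ) (lam : Fin N → ℝ) (i : Fin N) :
    christoffel N lam i = ∫ x in (-1:ℝ)..1, (Lagrange.basis Finset.univ lam i).eval x := by
  rw [christoffel]
  congr 1; funext x
  rw [Lagrange.basis, eval_prod]
  refine Finset.prod_congr rfl fun j _ => ?_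
  simp only [Lagrange.basisDivisor, eval_mul, eval_C, eval_sub, eval_X, div_eq_mul_inv]
  ring

lemma gauss_exact (N : ℕ) (hN : 1 ≤ N) (lam : Fin N → ℝ)
    (hroot : ∀ i, (legQ N).eval (lam i) = 0) (hinj : Function.Injective lam)
    (q : ℝ[X]) (hq : q.natDegree ≤ 2*N - 1) :
    ∑ i : Fin N, christoffel N lam i * q.eval (lam i) = ∫ x in (-1:ℝ)..1, q.eval x := by
  classical
  have hane : (alead N) ≠ 0 := (alead_pos N).ne'
  set p : ℝ[X] := C (alead N)⁻¹ * legQ N with hp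
  have hpdeg : p.natDegree = N := by
    rw [hp, natDegree_C_mul (inv_ne_zero hane), legQ_natDegree]
  have hmonic : p.Monic := by
    unfold Polynomial.Monic
    rw [leadingCoeff, hpdeg, hp, coeff_C_mul, legQ_coeff_top, inv_mul_cancel₀ hane]
  set r : ℝ[X] := q %ₘ p with hr
  set s : ℝ[X] := q /ₘ p with hs2
  have hqe : r + p * s = q := Polynomial.modByMonic_add_div q p
  have hsdeg : s.natDegree < N := by
    rw [hs2, Polynomial.natDegree_divByMonic q hmonic, hpdeg]
    omega
  have hrdeg : r.degree < (N : ℕ) := by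
    have h := Polynomial.degree_modByMonic_lt q hmonic
    rwa [Polynomial.degree_eq_natDegree hmonic.ne_zero, hpdeg] at h
  have hrndeg : r.natDegree < N := by
    rcases eq_or_ne r 0 with h0 | h0
    · rw [h0, natDegree_zero]; omega
    · exact natDegree_lt_iff_degree_lt h0 |>.mpr (by exact_mod_cast hrdeg)
  -- node values
  have hnode : ∀ i, q.eval (lam i) = r.eval (lam i) := by
    intro i
    rw [← hqe]
    simp [hp, hroot i]
  -- integral of p * s vanishes
  have hps : ∫ x in (-1:ℝ)..1, (p * s).eval x = 0 := by
    have h := orth_low N s hsdeg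
    have : ∫ x in (-1:ℝ)..1, (p * s).eval x =
        (alead N)⁻¹ * ∫ x in (-1:ℝ)..1, s.eval x * (legQ N).eval x := by
      rw [← intervalIntegral.integral_const_mul]
      congr 1; funext x; simp only [hp, eval_mul, eval_C]; ring
    rw [this, h, mul_zero]
  -- split the integral
  have hsplitint : ∫ x in (-1:ℝ)..1, q.eval x = ∫ x in (-1:ℝ)..1, r.eval x := by
    conv_lhs => rw [← hqe]
    rw [show (fun x => (r + p * s).eval x) = fun x => r.eval x + (p * s).eval x from
      by funext x; simp]
    rw [intervalIntegral.integral_add (by simpa using poly_intable r (-1) 1)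
      (poly_intable (p * s) (-1) 1), hps, add_zero]
  -- Lagrange interpolation of r
  have hinterp : r = Lagrange.interpolate Finset.univ lam (fun i => r.eval (lam i)) := by
    refine Lagrange.eq_interpolate (Function.Injective.injOn hinj) ?_
    simpa using hrdeg
  have hintr : ∫ x in (-1:ℝ)..1, r.eval x =
      ∑ i : Fin N, r.eval (lam i) * christoffel N lam i := by
    conv_lhs => rw [hinterp]
    rw [Lagrange.interpolate_apply]
    rw [show (fun x => (∑ i : Fin N, C (r.eval (lam i)) * Lagrange.basis Finset.univ lam i).eval x)
        = fun x => ∑ i : Fin N, r.eval (lam i) * (Lagrange.basis Finset.univ lam i).eval x from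
      by funext x; rw [eval_finset_sum]; exact Finset.sum_congr rfl fun i _ => by simp]
    rw [intervalIntegral.integral_finset_sum (fun i _ =>
      by simpa [eval_mul] using poly_intable (C (r.eval (lam i)) * Lagrange.basis Finset.univ lam i) (-1) 1)]
    refine Finset.sum_congr rfl fun i _ => ?_
    rw [intervalIntegral.integral_const_mul, christoffel_eq]
  rw [hsplitint, hintr]
  refine Finset.sum_congr rfl fun i _ => ?_
  rw [hnode i, mul_comm]

end SphAux
namespace SphAux
open Finset

lemma expsum (M : ℕ) (hM : 0 < M) (d : ℤ) (hdlt : d.natAbs < M) :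
    ∑ l ∈ Finset.range M, Complex.exp (Complex.I * d * (2 * π * l / M)) =
      if d = 0 then (M:ℂ) else 0 := by
  rcases eq_or_ne d 0 with rfl | hd
  · simp
  rw [if_neg hd]
  have hMne : (M:ℂ) ≠ 0 := by exact_mod_cast hM.ne'
  set z : ℂ := Complex.exp (Complex.I * d * (2 * π / M)) with hz
  have hterm : ∀ l : ℕ, Complex.exp (Complex.I * d * (2 * π * l / M)) = z ^ l := by
    intro l
    rw [hz, ← Complex.exp_nat_mul]
    congr 1
    field_simp
  have hzM : z ^ M = 1 := by
    rw [hz, ← Complex.exp_nat_mul]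
    have h : (M:ℂ) * (Complex.I * d * (2 * π / M)) = d * (2 * π * Complex.I) := by
      field_simp
    rw [h, Complex.exp_int_mul_two_pi_mul_I]
  have h2piI : (2 * (π:ℂ) * Complex.I) ≠ 0 := by
    simp [Real.pi_ne_zero, Complex.I_ne_zero]
  have hz1 : z ≠ 1 := by
    intro h
    rw [hz, Complex.exp_eq_one_iff] at h
    obtain ⟨nn, hnn⟩ := h
    have hdz : d = nn * M := by
      have h' := congrArg (fun t => t * (M:ℂ)) hnn
      field_simp at h'
      have hc : (d:ℂ) * (2 * π * Complex.I) = ((nn * M : ℤ):ℂ) * (2 * π * Complex.I) := by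
        push_cast
        linear_combination (2 * (π:ℂ) * Complex.I) * h'
      have hcc := mul_right_cancel₀ h2piI hc
      exact_mod_cast hcc
    have hnnne : nn ≠ 0 := by
      intro h0; rw [h0] at hdz; simp at hdz; exact hd hdz
    have habs : d.natAbs = nn.natAbs * M := by
      rw [hdz, Int.natAbs_mul, Int.natAbs_natCast]
    have : 1 ≤ nn.natAbs := Nat.one_le_iff_ne_zero.mpr (Int.natAbs_ne_zero.mpr hnnne)
    have : M ≤ d.natAbs := by
      rw [habs]
      calc M = 1 * M := (one_mul M).symm
        _ ≤ nn.natAbs * M := Nat.mul_le_mul_right M this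
    omega
  simp only [hterm]
  rw [geom_sum_eq hz1, hzM]
  simp

end SphAux
namespace SphAux
open Polynomial

lemma normAssoc_eval (n κ : ℕ) (x : ℝ) :
    normAssocLegendre n κ x = Real.sqrt (((n - κ).factorial : ℝ) / ((n + κ).factorial : ℝ)) *
      (1 - x ^ 2) ^ ((κ : ℝ) / 2) * (derivative^[κ] (legQ n)).eval x := by
  rw [normAssocLegendre, legendreP_eq, iteratedDeriv_eval]

lemma real_orth (N : ℕ) (hN : 1 ≤ N) (lam : Fin N → ℝ)
    (hmem : ∀ i, lam i ∈ Set.Ioo (-1 : ℝ) 1)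
    (hroot : ∀ i, legendreP N (lam i) = 0) (hinj : Function.Injective lam)
    (n n' κ : ℕ) (hn : n < N) (hn' : n' < N) (hκ : κ ≤ n) (hκ' : κ ≤ n') :
    ∑ i : Fin N, (Real.sqrt (2 * n + 1) * normAssocLegendre n κ (lam i)) *
        (Real.sqrt (2 * n' + 1) * normAssocLegendre n' κ (lam i)) *
        (christoffel N lam i / (2 * (2 * N + 1))) * (2 * (N:ℝ) + 1)
      = if n = n' then 1 else 0 := by
  have h2N1 : (0:ℝ) < 2 * (N:ℝ) + 1 := by positivity
  set q : ℝ[X] := ((1:ℝ[X]) - X^2)^κ * (derivative^[κ] (legQ n) * derivative^[κ] (legQ n'))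
    with hq
  set K : ℝ := Real.sqrt (2 * n + 1) * Real.sqrt (2 * n' + 1) *
    (Real.sqrt (((n - κ).factorial : ℝ) / ((n + κ).factorial : ℝ)) *
     Real.sqrt (((n' - κ).factorial : ℝ) / ((n' + κ).factorial : ℝ))) / 2 with hK
  have halg : ∀ a b sa sb p e1 e2 chr t : ℝ, p * p = t →
      (a * (sa * p * e1)) * (b * (sb * p * e2)) * (chr / (2 * (2 * (N:ℝ) + 1))) *
        (2 * (N:ℝ) + 1) = (a * b * (sa * sb) / 2) * (chr * (t * (e1 * e2))) := by
    intro a b sa sb p e1 e2 chr t hp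
    have hstep : (a * (sa * p * e1)) * (b * (sb * p * e2)) * (chr / (2 * (2 * (N:ℝ) + 1))) *
        (2 * (N:ℝ) + 1)
        = (a * b * (sa * sb)) * (p * p) * (e1 * e2) *
            (chr / (2 * (2 * (N:ℝ) + 1)) * (2 * (N:ℝ) + 1)) := by ring
    have hchr : chr / (2 * (2 * (N:ℝ) + 1)) * (2 * (N:ℝ) + 1) = chr / 2 := by
      field_simp
    rw [hstep, hp, hchr]
    ring
  have hterm : ∀ i : Fin N,
      (Real.sqrt (2 * n + 1) * normAssocLegendre n κ (lam i)) *
        (Real.sqrt (2 * n' + 1) * normAssocLegendre n' κ (lam i)) *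
        (christoffel N lam i / (2 * (2 * N + 1))) * (2 * (N:ℝ) + 1)
      = K * (christoffel N lam i * q.eval (lam i)) := by
    intro i
    have hx : 0 < 1 - (lam i)^2 := by
      obtain ⟨h1, h2⟩ := hmem i
      nlinarith
    have hrpow : (1 - (lam i)^2) ^ ((κ:ℝ)/2) * ((1 - (lam i)^2) ^ ((κ:ℝ)/2))
        = (1 - (lam i)^2) ^ κ := by
      rw [← Real.rpow_add hx]
      rw [show (κ:ℝ)/2 + (κ:ℝ)/2 = (κ:ℝ) from by ring, Real.rpow_natCast]
    have hqe : q.eval (lam i) = (1 - (lam i)^2)^κ *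
        ((derivative^[κ] (legQ n)).eval (lam i) * (derivative^[κ] (legQ n')).eval (lam i)) := by
      simp [hq]
    rw [normAssoc_eval, normAssoc_eval, hqe, hK]
    exact halg _ _ _ _ _ _ _ _ _ hrpow
  rw [Finset.sum_congr rfl (fun i _ => hterm i), ← Finset.mul_sum]
  have hdeg : q.natDegree ≤ 2 * N - 1 := by
    refine le_trans natDegree_mul_le (le_trans (add_le_add le_rfl natDegree_mul_le) ?_)
    rw [oneX_natDegree, iterate_legQ_natDegree n κ hκ, iterate_legQ_natDegree n' κ hκ']
    omega
  have hgauss := gauss_exact N hN lam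
    (fun i => by rw [← congrFun (legendreP_eq N) (lam i)]; exact hroot i) hinj q hdeg
  rw [hgauss]
  have hint : (∫ x in (-1:ℝ)..1, q.eval x) =
      if n = n' then ((n+κ).factorial : ℝ) / ((n-κ).factorial) * (2 / (2*(n:ℝ)+1)) else 0 := by
    rw [← assoc_int n n' κ hκ hκ']
    congr 1; funext x; simp [hq]
  rw [hint]
  by_cases he : n = n'
  · subst he
    rw [if_pos rfl, if_pos rfl, hK]
    have hs1 : Real.sqrt (2 * (n:ℝ) + 1) * Real.sqrt (2 * (n:ℝ) + 1) = 2 * (n:ℝ) + 1 :=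
      Real.mul_self_sqrt (by positivity)
    have hcn : (0:ℝ) ≤ ((n - κ).factorial : ℝ) / ((n + κ).factorial : ℝ) := by positivity
    have hs2 : Real.sqrt (((n - κ).factorial : ℝ) / ((n + κ).factorial : ℝ)) *
        Real.sqrt (((n - κ).factorial : ℝ) / ((n + κ).factorial : ℝ))
        = ((n - κ).factorial : ℝ) / ((n + κ).factorial : ℝ) := Real.mul_self_sqrt hcn
    rw [show Real.sqrt (2 * ↑n + 1) * Real.sqrt (2 * ↑n + 1) *
        (Real.sqrt (((n - κ).factorial : ℝ) / ((n + κ).factorial : ℝ)) *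
         Real.sqrt (((n - κ).factorial : ℝ) / ((n + κ).factorial : ℝ))) / 2
        = (2 * (n:ℝ) + 1) * (((n - κ).factorial : ℝ) / ((n + κ).factorial : ℝ)) / 2
        from by rw [hs1, hs2]]
    have hf1 : (0:ℝ) < ((n - κ).factorial : ℝ) := by positivity
    have hf2 : (0:ℝ) < ((n + κ).factorial : ℝ) := by positivity
    have hn1 : (0:ℝ) < 2 * (n:ℝ) + 1 := by positivity
    field_simp
  · rw [if_neg he, if_neg he, mul_zero]

end SphAux
namespace SphAux
open Finset

lemma discrete_orth (N : ℕ) (hN : 1 ≤ N) (lam : Fin N → ℝ)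
    (hmem : ∀ i, lam i ∈ Set.Ioo (-1 : ℝ) 1)
    (hroot : ∀ i, legendreP N (lam i) = 0) (hinj : Function.Injective lam)
    (n n' : ℕ) (k k' : ℤ) (hn : n < N) (hn' : n' < N)
    (hk : k.natAbs ≤ n) (hk' : k'.natAbs ≤ n') :
    ∑ i : Fin N, ∑ l ∈ Finset.range (2 * N + 1),
      sphY n k (Real.arccos (lam i)) (2 * π * l / (2 * N + 1)) *
        (starRingEnd ℂ) (sphY n' k' (Real.arccos (lam i)) (2 * π * l / (2 * N + 1))) *
        ((christoffel N lam i / (2 * (2 * N + 1)) : ℝ) : ℂ)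
      = if n = n' ∧ k = k' then 1 else 0 := by
  have hcos : ∀ i, Real.cos (Real.arccos (lam i)) = lam i := fun i =>
    Real.cos_arccos (hmem i).1.le (hmem i).2.le
  let A : Fin N → ℝ := fun i => Real.sqrt (2 * n + 1) * normAssocLegendre n k.natAbs (lam i)
  let A' : Fin N → ℝ := fun i => Real.sqrt (2 * n' + 1) * normAssocLegendre n' k'.natAbs (lam i)
  have hAd : ∀ i, A i = Real.sqrt (2 * n + 1) * normAssocLegendre n k.natAbs (lam i) :=
    fun _ => rfl
  have hA'd : ∀ i, A' i = Real.sqrt (2 * n' + 1) * normAssocLegendre n' k'.natAbs (lam i) :=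
    fun _ => rfl
  have hterm : ∀ (i : Fin N) (l : ℕ),
      sphY n k (Real.arccos (lam i)) (2 * π * l / (2 * N + 1)) *
        (starRingEnd ℂ) (sphY n' k' (Real.arccos (lam i)) (2 * π * l / (2 * N + 1))) *
        ((christoffel N lam i / (2 * (2 * N + 1)) : ℝ) : ℂ)
      = ((A i * A' i * (christoffel N lam i / (2 * (2 * N + 1))) : ℝ) : ℂ) *
          Complex.exp (Complex.I * ((k - k' : ℤ) : ℂ) *
            ((2 * π * l / (2 * N + 1) : ℝ) : ℂ)) := by
    intro i l
    set φ : ℝ := 2 * π * l / (2 * N + 1) with hφ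
    rw [sphY, sphY, hcos]
    rw [RingHom.map_mul (starRingEnd ℂ), Complex.conj_ofReal, ← Complex.exp_conj]
    rw [show (starRingEnd ℂ) (Complex.I * (k' : ℂ) * (φ : ℂ)) = -(Complex.I * (k' : ℂ) * (φ : ℂ))
      from by simp [Complex.conj_I, Complex.conj_ofReal]; try ring]
    rw [show Complex.exp (Complex.I * ((k - k' : ℤ) : ℂ) * (φ : ℂ)) =
        Complex.exp (Complex.I * (k : ℂ) * (φ : ℂ)) *
          Complex.exp (-(Complex.I * (k' : ℂ) * (φ : ℂ))) from by
      rw [← Complex.exp_add]; congr 1; push_cast; ring]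
    rw [hAd, hA'd]
    push_cast
    ring
  have hexp : (∑ l ∈ Finset.range (2 * N + 1),
      Complex.exp (Complex.I * ((k - k' : ℤ) : ℂ) * ((2 * π * l / (2 * N + 1) : ℝ) : ℂ)))
      = if (k - k' : ℤ) = 0 then ((2 * N + 1 : ℕ) : ℂ) else 0 := by
    rw [← expsum (2 * N + 1) (by omega) (k - k') (by omega)]
    refine Finset.sum_congr rfl fun l _ => ?_
    congr 1
    push_cast
    ring
  have hinner : ∀ i : Fin N, (∑ l ∈ Finset.range (2 * N + 1),
      sphY n k (Real.arccos (lam i)) (2 * π * l / (2 * N + 1)) *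
        (starRingEnd ℂ) (sphY n' k' (Real.arccos (lam i)) (2 * π * l / (2 * N + 1))) *
        ((christoffel N lam i / (2 * (2 * N + 1)) : ℝ) : ℂ))
      = ((A i * A' i * (christoffel N lam i / (2 * (2 * N + 1))) : ℝ) : ℂ) *
          (if (k - k' : ℤ) = 0 then ((2 * N + 1 : ℕ) : ℂ) else 0) := by
    intro i
    rw [← hexp, Finset.mul_sum]
    exact Finset.sum_congr rfl fun l _ => hterm i l
  rw [Finset.sum_congr rfl fun i _ => hinner i]
  by_cases hkk : k = k'
  · subst hkk
    simp only [sub_self, eq_self_iff_true, if_true, and_true]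
    have hcast : ∀ i : Fin N,
        ((A i * A' i * (christoffel N lam i / (2 * (2 * N + 1))) : ℝ) : ℂ) *
          ((2 * N + 1 : ℕ) : ℂ)
        = ((A i * A' i * (christoffel N lam i / (2 * (2 * N + 1))) * (2 * (N:ℝ) + 1) : ℝ) : ℂ) := by
      intro i
      push_cast
      ring
    rw [Finset.sum_congr rfl fun i _ => hcast i]
    have hsum : (∑ i : Fin N,
        ((A i * A' i * (christoffel N lam i / (2 * (2 * N + 1))) * (2 * (N:ℝ) + 1) : ℝ) : ℂ))
        = ((∑ i : Fin N,
            A i * A' i * (christoffel N lam i / (2 * (2 * N + 1))) * (2 * (N:ℝ) + 1) : ℝ) : ℂ) := by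
      norm_cast
    rw [hsum, real_orth N hN lam hmem hroot hinj n n' k.natAbs hn hn' hk hk']
    by_cases he : n = n'
    · simp [he]
    · simp [he]
  · rw [if_neg (by omega : ¬(k - k' : ℤ) = 0)]
    rw [if_neg (by tauto : ¬(n = n' ∧ k = k'))]
    simp

end SphAux
namespace SphAux
open Finset

lemma reconstruction (N : ℕ) (hN : 1 ≤ N) (lam : Fin N → ℝ)
    (hmem : ∀ i, lam i ∈ Set.Ioo (-1 : ℝ) 1)
    (hroot : ∀ i, legendreP N (lam i) = 0) (hinj : Function.Injective lam)
    (mj : ℕ) (hmj : mj ≤ N) (c : ℕ → ℤ → ℂ) (θ₀ φ₀ : ℝ) :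
    (∑ n ∈ Finset.range mj, ∑ k ∈ Finset.Icc (-(n:ℤ)) (n:ℤ), c n k * sphY n k θ₀ φ₀)
      = ∑ i : Fin N, ∑ l ∈ Finset.range (2 * N + 1),
          (∑ n ∈ Finset.range mj, ∑ k ∈ Finset.Icc (-(n:ℤ)) (n:ℤ),
            c n k * sphY n k (Real.arccos (lam i)) (2 * π * l / (2 * N + 1))) *
            scalingFun mj (Real.arccos (lam i)) (2 * π * l / (2 * N + 1)) θ₀ φ₀ *
            ((christoffel N lam i / (2 * (2 * N + 1)) : ℝ) : ℂ) := by
  classical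
  set σ : Finset ((_ : ℕ) × ℤ) :=
    (Finset.range mj).sigma (fun n => Finset.Icc (-(n:ℤ)) (n:ℤ)) with hσ
  have key : ∀ (p q : (_ : ℕ) × ℤ), p ∈ σ → q ∈ σ →
      (∑ i : Fin N, ∑ l ∈ Finset.range (2 * N + 1),
        sphY p.1 p.2 (Real.arccos (lam i)) (2 * π * l / (2 * N + 1)) *
          (starRingEnd ℂ) (sphY q.1 q.2 (Real.arccos (lam i)) (2 * π * l / (2 * N + 1))) *
          ((christoffel N lam i / (2 * (2 * N + 1)) : ℝ) : ℂ))
      = if p.1 = q.1 ∧ p.2 = q.2 then 1 else 0 := by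
    intro p q hp hq
    rw [hσ, Finset.mem_sigma, Finset.mem_range, Finset.mem_Icc] at hp hq
    exact discrete_orth N hN lam hmem hroot hinj p.1 q.1 p.2 q.2 (by omega) (by omega)
      (by omega) (by omega)
  refine Eq.symm ?_
  calc
    ∑ i : Fin N, ∑ l ∈ Finset.range (2 * N + 1),
        (∑ n ∈ Finset.range mj, ∑ k ∈ Finset.Icc (-(n:ℤ)) (n:ℤ),
          c n k * sphY n k (Real.arccos (lam i)) (2 * π * l / (2 * N + 1))) *
          scalingFun mj (Real.arccos (lam i)) (2 * π * l / (2 * N + 1)) θ₀ φ₀ *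
          ((christoffel N lam i / (2 * (2 * N + 1)) : ℝ) : ℂ)
      = ∑ i : Fin N, ∑ l ∈ Finset.range (2 * N + 1), ∑ p ∈ σ, ∑ q ∈ σ,
          (c p.1 p.2 * sphY p.1 p.2 (Real.arccos (lam i)) (2 * π * l / (2 * N + 1))) *
            ((starRingEnd ℂ) (sphY q.1 q.2 (Real.arccos (lam i)) (2 * π * l / (2 * N + 1))) *
              sphY q.1 q.2 θ₀ φ₀) *
            ((christoffel N lam i / (2 * (2 * N + 1)) : ℝ) : ℂ) := by
        refine Finset.sum_congr rfl fun i _ => Finset.sum_congr rfl fun l _ => ?_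
        rw [scalingFun, Finset.sum_sigma' (Finset.range mj) _
          (fun n k => (starRingEnd ℂ) (sphY n k (Real.arccos (lam i)) (2 * π * l / (2 * N + 1))) *
            sphY n k θ₀ φ₀),
          Finset.sum_sigma' (Finset.range mj) _
          (fun n k => c n k * sphY n k (Real.arccos (lam i)) (2 * π * l / (2 * N + 1)))]
        rw [Finset.sum_mul, Finset.sum_mul]
        refine Finset.sum_congr rfl fun p _ => ?_
        rw [Finset.mul_sum, Finset.sum_mul]
    _ = ∑ p ∈ σ, ∑ q ∈ σ, ∑ i : Fin N, ∑ l ∈ Finset.range (2 * N + 1),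
          (c p.1 p.2 * sphY p.1 p.2 (Real.arccos (lam i)) (2 * π * l / (2 * N + 1))) *
            ((starRingEnd ℂ) (sphY q.1 q.2 (Real.arccos (lam i)) (2 * π * l / (2 * N + 1))) *
              sphY q.1 q.2 θ₀ φ₀) *
            ((christoffel N lam i / (2 * (2 * N + 1)) : ℝ) : ℂ) := by
        rw [show (∑ i : Fin N, ∑ l ∈ Finset.range (2 * N + 1), ∑ p ∈ σ, ∑ q ∈ σ,
            (c p.1 p.2 * sphY p.1 p.2 (Real.arccos (lam i)) (2 * π * l / (2 * N + 1))) *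
              ((starRingEnd ℂ) (sphY q.1 q.2 (Real.arccos (lam i)) (2 * π * l / (2 * N + 1))) *
                sphY q.1 q.2 θ₀ φ₀) *
              ((christoffel N lam i / (2 * (2 * N + 1)) : ℝ) : ℂ))
            = ∑ i : Fin N, ∑ p ∈ σ, ∑ l ∈ Finset.range (2 * N + 1), ∑ q ∈ σ, _
          from Finset.sum_congr rfl fun i _ => Finset.sum_comm]
        rw [Finset.sum_comm]
        refine Finset.sum_congr rfl fun p _ => ?_
        rw [show (∑ i : Fin N, ∑ l ∈ Finset.range (2 * N + 1), ∑ q ∈ σ,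
            (c p.1 p.2 * sphY p.1 p.2 (Real.arccos (lam i)) (2 * π * l / (2 * N + 1))) *
              ((starRingEnd ℂ) (sphY q.1 q.2 (Real.arccos (lam i)) (2 * π * l / (2 * N + 1))) *
                sphY q.1 q.2 θ₀ φ₀) *
              ((christoffel N lam i / (2 * (2 * N + 1)) : ℝ) : ℂ))
            = ∑ i : Fin N, ∑ q ∈ σ, ∑ l ∈ Finset.range (2 * N + 1), _
          from Finset.sum_congr rfl fun i _ => Finset.sum_comm]
        rw [Finset.sum_comm]
    _ = ∑ p ∈ σ, ∑ q ∈ σ, (c p.1 p.2 * sphY q.1 q.2 θ₀ φ₀) *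
          (∑ i : Fin N, ∑ l ∈ Finset.range (2 * N + 1),
            sphY p.1 p.2 (Real.arccos (lam i)) (2 * π * l / (2 * N + 1)) *
              (starRingEnd ℂ) (sphY q.1 q.2 (Real.arccos (lam i)) (2 * π * l / (2 * N + 1))) *
              ((christoffel N lam i / (2 * (2 * N + 1)) : ℝ) : ℂ)) := by
        refine Finset.sum_congr rfl fun p _ => Finset.sum_congr rfl fun q _ => ?_
        rw [Finset.mul_sum]
        refine Finset.sum_congr rfl fun i _ => ?_
        rw [Finset.mul_sum]
        refine Finset.sum_congr rfl fun l _ => ?_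
        ring
    _ = ∑ p ∈ σ, ∑ q ∈ σ, (c p.1 p.2 * sphY q.1 q.2 θ₀ φ₀) *
          (if p.1 = q.1 ∧ p.2 = q.2 then 1 else 0) := by
        refine Finset.sum_congr rfl fun p hp => Finset.sum_congr rfl fun q hq => ?_
        rw [key p q hp hq]
    _ = ∑ p ∈ σ, c p.1 p.2 * sphY p.1 p.2 θ₀ φ₀ := by
        refine Finset.sum_congr rfl fun p hp => ?_
        rw [show (∑ q ∈ σ, (c p.1 p.2 * sphY q.1 q.2 θ₀ φ₀) *
            (if p.1 = q.1 ∧ p.2 = q.2 then 1 else 0))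
            = ∑ q ∈ σ, (if q = p then c p.1 p.2 * sphY q.1 q.2 θ₀ φ₀ else 0) from
          Finset.sum_congr rfl fun q _ => by
            by_cases h : q = p
            · subst h; simp
            · rw [if_neg h, if_neg, mul_zero]
              rintro ⟨h1, h2⟩
              exact h (Sigma.ext h1.symm (heq_of_eq h2.symm))]
        rw [Finset.sum_ite_eq' σ p (fun q => c p.1 p.2 * sphY q.1 q.2 θ₀ φ₀), if_pos hp]
    _ = ∑ n ∈ Finset.range mj, ∑ k ∈ Finset.Icc (-(n:ℤ)) (n:ℤ), c n k * sphY n k θ₀ φ₀ := by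
        rw [hσ, Finset.sum_sigma]

end SphAux

/-- Spanning property: if `m_j ≤ N`, the scaling functions `φ_j(·, ξ_{lm})`
centered at the `N(2N+1)` discretization points span `V_j`, and every
`f ∈ V_j` satisfies `f(ξ) = Σ_{l,m} f(ξ_{lm}) φ_j(ξ, ξ_{lm}) μ_N(ξ_{lm})`. -/
theorem scaling_spanning (N : ℕ) (hN : 1 ≤ N) (lam : Fin N → ℝ)
    (hmem : ∀ i, lam i ∈ Set.Ioo (-1 : ℝ) 1)
    (hroot : ∀ i, legendreP N (lam i) = 0) (hinj : Function.Injective lam)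
    (m : ℕ → ℕ) (hm : StrictMono m) (hpos : ∀ j, 1 ≤ m j)
    (j : ℕ) (hj : m j ≤ N) :
    Submodule.span ℂ
        {g : ℝ → ℝ → ℂ | ∃ (i : Fin N) (l : Fin (2 * N + 1)),
          g = fun θ φ =>
            scalingFun (m j) (Real.arccos (lam i)) (2 * π * l / (2 * N + 1)) θ φ}
      = Submodule.span ℂ
          {g : ℝ → ℝ → ℂ | ∃ (n : ℕ) (k : ℤ), n < m j ∧ k.natAbs ≤ n ∧
            g = sphY n k} ∧
    ∀ (c : ℕ → ℤ → ℂ) (θ₀ φ₀ : ℝ),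
      (∑ n ∈ Finset.range (m j), ∑ k ∈ Finset.Icc (-(n:ℤ)) (n:ℤ),
        c n k * sphY n k θ₀ φ₀)
        = ∑ i : Fin N, ∑ l ∈ Finset.range (2 * N + 1),
            (∑ n ∈ Finset.range (m j), ∑ k ∈ Finset.Icc (-(n:ℤ)) (n:ℤ),
              c n k * sphY n k (Real.arccos (lam i)) (2 * π * l / (2 * N + 1))) *
            scalingFun (m j) (Real.arccos (lam i)) (2 * π * l / (2 * N + 1)) θ₀ φ₀ *
            ((christoffel N lam i / (2 * (2 * N + 1)) : ℝ) : ℂ) := by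
  classical
  have hrec : ∀ (c : ℕ → ℤ → ℂ) (θ₀ φ₀ : ℝ),
      (∑ n ∈ Finset.range (m j), ∑ k ∈ Finset.Icc (-(n:ℤ)) (n:ℤ),
        c n k * sphY n k θ₀ φ₀)
        = ∑ i : Fin N, ∑ l ∈ Finset.range (2 * N + 1),
            (∑ n ∈ Finset.range (m j), ∑ k ∈ Finset.Icc (-(n:ℤ)) (n:ℤ),
              c n k * sphY n k (Real.arccos (lam i)) (2 * π * l / (2 * N + 1))) *
            scalingFun (m j) (Real.arccos (lam i)) (2 * π * l / (2 * N + 1)) θ₀ φ₀ *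
            ((christoffel N lam i / (2 * (2 * N + 1)) : ℝ) : ℂ) :=
    fun c θ₀ φ₀ => SphAux.reconstruction N hN lam hmem hroot hinj (m j) hj c θ₀ φ₀
  refine ⟨le_antisymm ?_ ?_, hrec⟩
  · rw [Submodule.span_le]
    rintro g ⟨i, l, rfl⟩
    have hg : (fun θ φ =>
        scalingFun (m j) (Real.arccos (lam i)) (2 * π * l / (2 * N + 1)) θ φ)
        = ∑ p ∈ (Finset.range (m j)).sigma (fun n => Finset.Icc (-(n:ℤ)) (n:ℤ)),
            ((starRingEnd ℂ)
              (sphY p.1 p.2 (Real.arccos (lam i)) (2 * π * l / (2 * N + 1)))) •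
              (sphY p.1 p.2) := by
      funext θ φ
      simp only [Finset.sum_apply, Pi.smul_apply, smul_eq_mul]
      rw [scalingFun, Finset.sum_sigma' (Finset.range (m j)) _
        (fun n k => (starRingEnd ℂ)
          (sphY n k (Real.arccos (lam i)) (2 * π * l / (2 * N + 1))) * sphY n k θ φ)]
    rw [hg]
    refine Submodule.sum_mem _ fun p hp => Submodule.smul_mem _ _ (Submodule.subset_span ?_)
    obtain ⟨h1, h2⟩ := Finset.mem_sigma.mp hp
    rw [Finset.mem_range] at h1
    rw [Finset.mem_Icc] at h2
    exact ⟨p.1, p.2, h1, by omega, rfl⟩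
  · rw [Submodule.span_le]
    rintro g ⟨n, k, hn, hk, rfl⟩
    set c : ℕ → ℤ → ℂ := fun n' k' => if n' = n ∧ k' = k then 1 else 0 with hc
    have hmemnk : (⟨n, k⟩ : (_ : ℕ) × ℤ) ∈
        (Finset.range (m j)).sigma (fun n => Finset.Icc (-(n:ℤ)) (n:ℤ)) := by
      rw [Finset.mem_sigma, Finset.mem_range, Finset.mem_Icc]
      exact ⟨hn, show -(n:ℤ) ≤ k by omega, show (k:ℤ) ≤ (n:ℤ) by omega⟩
    have hcollapse : ∀ θ φ : ℝ,
        (∑ n' ∈ Finset.range (m j), ∑ k' ∈ Finset.Icc (-(n':ℤ)) (n':ℤ),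
          c n' k' * sphY n' k' θ φ) = sphY n k θ φ := by
      intro θ φ
      rw [Finset.sum_sigma' (Finset.range (m j)) _
        (fun n' k' => c n' k' * sphY n' k' θ φ)]
      rw [show (∑ p ∈ (Finset.range (m j)).sigma (fun n => Finset.Icc (-(n:ℤ)) (n:ℤ)),
          c p.1 p.2 * sphY p.1 p.2 θ φ)
          = ∑ p ∈ (Finset.range (m j)).sigma (fun n => Finset.Icc (-(n:ℤ)) (n:ℤ)),
              (if p = (⟨n, k⟩ : (_ : ℕ) × ℤ) then sphY p.1 p.2 θ φ else 0) from
        Finset.sum_congr rfl fun p _ => by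
          by_cases h : p = (⟨n, k⟩ : (_ : ℕ) × ℤ)
          · subst h
            rw [if_pos rfl, hc]
            simp
          · rw [if_neg h, hc]
            have hcond : ¬(p.1 = n ∧ p.2 = k) := fun ⟨ha, hb⟩ =>
              h (Sigma.ext ha (heq_of_eq hb))
            simp only [hcond, if_false, zero_mul]]
      rw [Finset.sum_ite_eq' _ (⟨n, k⟩ : (_ : ℕ) × ℤ)
        (fun p => sphY p.1 p.2 θ φ), if_pos hmemnk]
    have hrep : sphY n k
        = ∑ i : Fin N, ∑ l ∈ Finset.range (2 * N + 1),
            (sphY n k (Real.arccos (lam i)) (2 * π * l / (2 * N + 1)) *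
              ((christoffel N lam i / (2 * (2 * N + 1)) : ℝ) : ℂ)) •
              (fun θ₀ φ₀ =>
                scalingFun (m j) (Real.arccos (lam i)) (2 * π * l / (2 * N + 1)) θ₀ φ₀) := by
      funext θ₀ φ₀
      simp only [Finset.sum_apply, Pi.smul_apply, smul_eq_mul]
      have h := hrec c θ₀ φ₀
      simp only [hcollapse] at h
      rw [h]
      exact Finset.sum_congr rfl fun i _ => Finset.sum_congr rfl fun l _ => by ring
    rw [hrep]
    refine Submodule.sum_mem _ fun i _ => Submodule.sum_mem _ fun l hl => ?_
    refine Submodule.smul_mem _ _ (Submodule.subset_span ?_)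
    exact ⟨i, ⟨l, Finset.mem_range.mp hl⟩, rfl⟩
end
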